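/- arXiv:2303.05942 — 11 statements merged into one kernel-verified Lean document; each statement's English description precedes it below -/
import Mathlib

section
/- For every real t > 0 and all real x, y, the following spectral-representation identity for Brownian motion on (-1,1) killed at both endpoints holds: (1/(2·√(2πt))) · ∑_{n∈ℤ} ( exp(-(x-y+4n)²/(2t)) - exp(-(x+y+4n+2)²/(2t)) ) = (1/2) · ∑_{n=1}^∞ exp(-n²π²t/8) · sin(nπ(x+1)/2) · sin(nπ(y+1)/2). -/
open Real HurwitzZeta

/-!
Each Gaussian series over `ℤ` is a periodization of the heat kernel with period `4`; Poisson
summation (Jacobi's theta transformation, `evenKernel_functional_equation`) turns it into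
`√(2πt)/4` times the cosine series `1 + 2 ∑ₙ cos (nπz/2) exp (-n²π²t/8)`. Subtracting the series
for `z = x - y` and `z = x + y + 2` cancels the constant terms, and
`cos (A - B) - cos (A + B) = 2 sin A sin B` produces the sine eigenfunctions.
-/

lemma hasSum_int_exp_neg_sq_add_mul {t L : ℝ} (ht : 0 < t) (hL : 0 < L) (z : ℝ) :
    HasSum (fun n : ℤ => exp (-(z + L * n) ^ 2 / (2 * t)))
      (sqrt (2 * π * t) / L * cosKernel (z / L : ℝ) (2 * π * t / L ^ 2)) := by
  have hT : 0 < L ^ 2 / (2 * π * t) := by positivity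
  have h := hasSum_int_evenKernel (z / L) hT
  rw [evenKernel_functional_equation, ← sqrt_eq_rpow, sqrt_div' _ (by positivity : 0 ≤ 2 * π * t),
    sqrt_sq hL.le, one_div_div, one_div_div] at h
  refine h.congr_fun fun n => ?_
  congr 1
  field_simp
  ring

lemma hasSum_nat_cosKernel_sub_cosKernel (a b : ℝ) {s : ℝ} (hs : 0 < s) :
    HasSum (fun n : ℕ => 2 * (cos (2 * π * a * (n + 1)) - cos (2 * π * b * (n + 1))) *
      exp (-π * (n + 1) ^ 2 * s)) (cosKernel a s - cosKernel b s) := by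
  rw [← sub_sub_sub_cancel_right _ _ 1]
  exact ((hasSum_nat_cosKernel₀ a hs).sub (hasSum_nat_cosKernel₀ b hs)).congr_fun fun n => by ring

/-- Spectral representation of the transition density of Brownian motion on `(-1,1)`
killed at both endpoints. -/
theorem killed_bm_spectral (t x y : ℝ) (ht : 0 < t) :
    (1 / (2 * Real.sqrt (2 * π * t))) *
      ∑' n : ℤ, (Real.exp (-(x - y + 4 * (n : ℝ)) ^ 2 / (2 * t)) -
        Real.exp (-(x + y + 4 * (n : ℝ) + 2) ^ 2 / (2 * t)))
    = (1 / 2) *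
        ∑' n : ℕ, Real.exp (-((n : ℝ) + 1) ^ 2 * π ^ 2 * t / 8) *
          Real.sin (((n : ℝ) + 1) * π * (x + 1) / 2) *
          Real.sin (((n : ℝ) + 1) * π * (y + 1) / 2) := by
  have hperiod (z : ℝ) : HasSum (fun n : ℤ => exp (-(z + 4 * n) ^ 2 / (2 * t)))
      (sqrt (2 * π * t) / 4 * cosKernel (z / 4 : ℝ) (π * t / 8)) := by
    convert hasSum_int_exp_neg_sq_add_mul ht four_pos z using 3
    ring
  have hlhs := ((hperiod (x - y)).sub (hperiod (x + y + 2))).congr_fun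
    (g := fun n : ℤ => exp (-(x - y + 4 * n) ^ 2 / (2 * t)) -
      exp (-(x + y + 4 * n + 2) ^ 2 / (2 * t))) fun n => by ring_nf
  have hrhs := ((hasSum_nat_cosKernel_sub_cosKernel ((x - y) / 4) ((x + y + 2) / 4)
    (by positivity : 0 < π * t / 8)).div_const 4).congr_fun
    (g := fun n : ℕ => exp (-((n : ℝ) + 1) ^ 2 * π ^ 2 * t / 8) *
      sin (((n : ℝ) + 1) * π * (x + 1) / 2) * sin (((n : ℝ) + 1) * π * (y + 1) / 2)) fun n => by
    rw [show 2 * π * ((x - y) / 4) * (n + 1) = (n + 1) * π * (x + 1) / 2 - (n + 1) * π * (y + 1) / 2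
      by ring, show 2 * π * ((x + y + 2) / 4) * (n + 1) =
        (n + 1) * π * (x + 1) / 2 + (n + 1) * π * (y + 1) / 2 by ring, cos_sub, cos_add]
    ring_nf
  have hsqrt : sqrt (2 * π * t) ≠ 0 := by positivity
  rw [hlhs.tsum_eq, hrhs.tsum_eq]
  field_simp
end

section
/- For every real α > 0 and all real x, y with -1 ≤ y ≤ x ≤ 1, the Green function identity for reflected Brownian motion on [-1,1] holds: cosh((1-x)·√(2α)) · cosh((1+y)·√(2α)) / ( √(2α) · sinh(2·√(2α)) ) = (1/2) · ( 1/(2α) + ∑_{n=1}^∞ (1/(α + n²π²/8)) · cos(nπ(x+1)/2) · cos(nπ(y+1)/2) ). -/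
open Real AddCircle

/-!
On `[0, T]` the function `t ↦ cosh (s (T/2 - t))` takes the same value at both ends, so it lifts
to a continuous function on the circle `AddCircle T`. Splitting `cosh` into two exponentials, its
Fourier coefficients are `2 s sinh (s T/2) / (T (s² + (2πn/T)²))`, which decay like `n⁻²`; hence the
Fourier series converges to it at every point of `[0, T]`, and pairing `±n` gives a cosine series.
With `T = 2L`, adding the cosine series at `x - y` and at `x + y` turns the left side into
`2 cosh (s (L - x)) cosh (s y)` and the cosines into `2 cos (nπx/L) cos (nπy/L)`. The theorem is the
case `L = 2`, `s = √(2α)`, evaluated at `x + 1` and `y + 1`.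
-/

theorem AddCircle.liftIco_coe_apply_of_mem_Icc {𝕜 B : Type*} [AddCommGroup 𝕜] [LinearOrder 𝕜]
    [IsOrderedAddMonoid 𝕜] [Archimedean 𝕜] {p a : 𝕜} [Fact (0 < p)] {f : 𝕜 → B}
    (hf : f a = f (a + p)) {x : 𝕜} (hx : x ∈ Set.Icc a (a + p)) : liftIco p a f x = f x := by
  rcases hx.1.eq_or_lt with rfl | hax
  · exact liftIco_coe_apply ⟨le_rfl, lt_add_of_pos_right _ Fact.out⟩
  · rw [← liftIoc_eq_liftIco hf]; exact liftIoc_coe_apply ⟨hax, hx.2⟩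

theorem integral_exp_neg_fourier_mul_exp {T : ℝ} (hT : 0 < T) (n : ℤ) {c : ℂ}
    (hc : c * T ≠ 2 * π * Complex.I * n) :
    ∫ x in (0 : ℝ)..T, Complex.exp (2 * π * Complex.I * (-n : ℤ) * x / T) * Complex.exp (c * x)
      = T * (Complex.exp (c * T) - 1) / (c * T - 2 * π * Complex.I * n) := by
  have hTc : (T : ℂ) ≠ 0 := Complex.ofReal_ne_zero.2 hT.ne'
  have hd : c * T - 2 * π * Complex.I * n ≠ 0 := sub_ne_zero.2 hc
  set d := (c * T - 2 * π * Complex.I * n) / T with hd_def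
  have hd0 : d ≠ 0 := div_ne_zero hd hTc
  have hprod : ∀ x : ℝ, Complex.exp (2 * π * Complex.I * (-n : ℤ) * x / T) * Complex.exp (c * x)
      = Complex.exp (d * x) := fun x => by
    rw [← Complex.exp_add]; congr 1; rw [hd_def]; push_cast; field_simp; ring
  have hperiod : Complex.exp (d * T) = Complex.exp (c * T) := by
    rw [hd_def, div_mul_cancel₀ _ hTc, Complex.exp_sub,
      show 2 * π * Complex.I * n = n * (2 * π * Complex.I) by ring,
      Complex.exp_int_mul_two_pi_mul_I, div_one]
  simp_rw [hprod]
  rw [integral_exp_mul_complex hd0, hperiod]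
  push_cast
  rw [mul_zero, Complex.exp_zero, hd_def]
  field_simp

theorem ofReal_cosh_mul_sub (s a x : ℝ) :
    (Real.cosh (s * (a - x)) : ℂ)
      = Complex.exp (s * a) / 2 * Complex.exp ((-s : ℝ) * x)
        + Complex.exp (-(s * a)) / 2 * Complex.exp ((s : ℝ) * x) := by
  have h₁ : Complex.exp (s * (a - x) : ℝ) = Complex.exp (s * a) * Complex.exp ((-s : ℝ) * x) := by
    rw [← Complex.exp_add]; push_cast; ring_nf
  have h₂ :
      Complex.exp (-(s * (a - x) : ℝ)) = Complex.exp (-(s * a)) * Complex.exp ((s : ℝ) * x) := by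
    rw [← Complex.exp_add]; push_cast; ring_nf
  rw [Complex.ofReal_cosh, Complex.cosh, h₁, h₂]
  ring

noncomputable def coshFourierCoeff (T s : ℝ) (n : ℤ) : ℝ :=
  2 * s * Real.sinh (s * T / 2) / (T * (s ^ 2 + (2 * π * n / T) ^ 2))

theorem coshFourierCoeff_neg (T s : ℝ) (n : ℤ) :
    coshFourierCoeff T s (-n) = coshFourierCoeff T s n := by
  simp only [coshFourierCoeff, Int.cast_neg, mul_neg, neg_div, neg_sq]

theorem summable_coshFourierCoeff {T : ℝ} (hT : 0 < T) (s : ℝ) :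
    Summable (coshFourierCoeff T s) := by
  set A := |2 * s * Real.sinh (s * T / 2)|
  refine .of_norm_bounded_eventually
    ((Real.summable_one_div_int_pow.2 one_lt_two).mul_left (A * T / (4 * π ^ 2))) ?_
  filter_upwards [Filter.eventually_cofinite_ne 0] with n hn
  have hn2 : (0 : ℝ) < (n : ℝ) ^ 2 := by
    have : (n : ℝ) ≠ 0 := Int.cast_ne_zero.2 hn
    positivity
  have hden : 4 * π ^ 2 * n ^ 2 / T ≤ T * (s ^ 2 + (2 * π * n / T) ^ 2) := by
    have : T * (s ^ 2 + (2 * π * n / T) ^ 2) = T * s ^ 2 + 4 * π ^ 2 * n ^ 2 / T := by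
      field_simp; ring
    rw [this]; nlinarith [sq_nonneg s]
  calc ‖coshFourierCoeff T s n‖ = A / (T * (s ^ 2 + (2 * π * n / T) ^ 2)) := by
        rw [Real.norm_eq_abs, coshFourierCoeff, abs_div,
          abs_of_pos ((by positivity : (0 : ℝ) < 4 * π ^ 2 * n ^ 2 / T).trans_le hden)]
    _ ≤ A / (4 * π ^ 2 * n ^ 2 / T) := div_le_div_of_nonneg_left (abs_nonneg _) (by positivity) hden
    _ = A * T / (4 * π ^ 2) * (1 / (n : ℝ) ^ 2) := by field_simp

theorem ofReal_mul_ofReal_ne_two_pi_mul_I_mul_int {σ T : ℝ} (hσ : σ ≠ 0) (hT : T ≠ 0) (n : ℤ) :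
    (σ : ℂ) * T ≠ 2 * π * Complex.I * n := fun h => by
  have hre := congrArg Complex.re h
  simp only [Complex.mul_re, Complex.ofReal_re, Complex.ofReal_im, mul_zero, sub_zero,
    Complex.re_ofNat, Complex.im_ofNat, Complex.I_re, Complex.mul_im, zero_mul, add_zero,
    Complex.I_im, mul_one, sub_self, Complex.intCast_re, Complex.intCast_im, mul_eq_zero] at hre
  exact hre.elim hσ hT

theorem integral_exp_neg_fourier_mul_cosh {T s : ℝ} (hT : 0 < T) (hs : s ≠ 0) (n : ℤ) :
    ∫ x in (0 : ℝ)..T, Complex.exp (2 * π * Complex.I * (-n : ℤ) * x / T)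
        * (Real.cosh (s * (T / 2 - x)) : ℂ)
      = T * coshFourierCoeff T s n := by
  have hne : ∀ σ : ℝ, σ ≠ 0 → (σ : ℂ) * T ≠ 2 * π * Complex.I * n := fun σ hσ =>
    ofReal_mul_ofReal_ne_two_pi_mul_I_mul_int hσ hT.ne' n
  simp_rw [ofReal_cosh_mul_sub, mul_add, mul_left_comm (Complex.exp _) (_ / 2)]
  rw [intervalIntegral.integral_add (by apply Continuous.intervalIntegrable; fun_prop)
      (by apply Continuous.intervalIntegrable; fun_prop),
    intervalIntegral.integral_const_mul, intervalIntegral.integral_const_mul,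
    integral_exp_neg_fourier_mul_exp hT n (hne _ (neg_ne_zero.2 hs)),
    integral_exp_neg_fourier_mul_exp hT n (hne _ hs), Complex.exp_neg]
  push_cast
  set E := Complex.exp (s * (T / 2))
  have hE : E ≠ 0 := Complex.exp_ne_zero _
  have hE2 : Complex.exp (s * T) = E * E := by rw [← Complex.exp_add]; ring_nf
  have hE'2 : Complex.exp (-s * T) = (E * E)⁻¹ := by
    rw [← Complex.exp_add, ← Complex.exp_neg]; ring_nf
  have hsinh : Complex.sinh (s * T / 2) = (E - E⁻¹) / 2 := by
    rw [mul_div_assoc, Complex.sinh, Complex.exp_neg]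
  have hfactor : (T : ℂ) * ((s : ℂ) ^ 2 + (2 * π * n / T) ^ 2)
      = ((s : ℂ) * T + 2 * π * Complex.I * n) * ((s : ℂ) * T - 2 * π * Complex.I * n) / T := by
    have : (T : ℂ) ≠ 0 := Complex.ofReal_ne_zero.2 hT.ne'
    field_simp
    linear_combination (4 * π ^ 2 * n ^ 2 : ℂ) * Complex.I_sq
  rw [coshFourierCoeff]
  push_cast
  rw [hE2, hE'2, hsinh, hfactor,
    show -(s : ℂ) * T - 2 * π * Complex.I * n = -((s : ℂ) * T + 2 * π * Complex.I * n) by ring]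
  have hP : (s : ℂ) * T + 2 * π * Complex.I * n ≠ 0 := fun h =>
    hne _ (neg_ne_zero.2 hs) (by push_cast; linear_combination -h)
  have hM : (s : ℂ) * T - 2 * π * Complex.I * n ≠ 0 := sub_ne_zero.2 (hne s hs)
  -- only `P + M = 2 s T` is needed from here on
  generalize hP_def : (s : ℂ) * T + 2 * π * Complex.I * n = P at hP ⊢
  generalize hM_def : (s : ℂ) * T - 2 * π * Complex.I * n = M at hM ⊢
  field_simp
  linear_combination T * (1 - E ^ 2) * (hP_def + hM_def)

theorem fourierCoeff_liftIco_cosh {T s : ℝ} [hT : Fact (0 < T)] (hs : s ≠ 0) (n : ℤ) :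
    fourierCoeff (liftIco T 0 fun t : ℝ => (Real.cosh (s * (T / 2 - t)) : ℂ)) n
      = coshFourierCoeff T s n := by
  rw [fourierCoeff_liftIco_eq, fourierCoeffOn_eq_integral]
  simp_rw [fourier_coe_apply, zero_add, sub_zero, smul_eq_mul]
  rw [integral_exp_neg_fourier_mul_cosh hT.out hs, Complex.real_smul, ← mul_assoc,
    ← Complex.ofReal_mul, one_div_mul_cancel hT.out.ne', Complex.ofReal_one, one_mul]

theorem hasSum_coshFourierCoeff_mul_fourier {T s u : ℝ} (hT : 0 < T) (hs : s ≠ 0)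
    (hu : u ∈ Set.Icc 0 T) :
    HasSum (fun n : ℤ => (coshFourierCoeff T s n : ℂ) * fourier n (u : AddCircle T))
      (Real.cosh (s * (T / 2 - u)) : ℂ) := by
  have : Fact (0 < T) := ⟨hT⟩
  set f : ℝ → ℂ := fun t => (Real.cosh (s * (T / 2 - t)) : ℂ)
  have hperiodic : f 0 = f (0 + T) := by
    simp only [f, zero_add, sub_zero, ← Real.cosh_neg (s * (T / 2 - T))]
    ring_nf
  let F : C(AddCircle T, ℂ) := ⟨liftIco T 0 f, liftIco_continuous hperiodic (by fun_prop)⟩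
  have hcoeff : fourierCoeff F = fun n => (coshFourierCoeff T s n : ℂ) :=
    funext (fourierCoeff_liftIco_cosh hs)
  have hsum : Summable (fourierCoeff F) := by
    rw [hcoeff]; exact Complex.summable_ofReal.2 (summable_coshFourierCoeff hT s)
  have := has_pointwise_sum_fourier_series_of_summable hsum u
  rwa [hcoeff, show F u = f u from liftIco_coe_apply_of_mem_Icc hperiodic (by rwa [zero_add])]
    at this

theorem hasSum_coshFourierCoeff_mul_cos {T s u : ℝ} (hT : 0 < T) (hs : s ≠ 0)
    (hu : u ∈ Set.Icc 0 T) :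
    HasSum (fun n : ℕ => 2 * coshFourierCoeff T s (n + 1) * Real.cos (2 * π * (n + 1) * u / T))
      (Real.cosh (s * (T / 2 - u)) - coshFourierCoeff T s 0) := by
  have h := (hasSum_coshFourierCoeff_mul_fourier hT hs hu).nat_add_neg
  rw [← hasSum_nat_add_iff' 1, Finset.sum_range_one] at h
  simp only [Nat.cast_zero, neg_zero, add_sub_add_right_eq_sub, fourier_zero, mul_one,
    ← Complex.ofReal_sub] at h
  refine Complex.hasSum_ofReal.1 (h.congr_fun fun n => ?_)
  simp only [fourier_coe_apply, coshFourierCoeff_neg]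
  push_cast
  rw [Complex.cos]
  ring_nf

theorem hasSum_cosh_mul_cosh {L s x y : ℝ} (hL : 0 < L) (hs : s ≠ 0) (hy : 0 ≤ y) (hyx : y ≤ x)
    (hx : x ≤ L) :
    HasSum (fun n : ℕ => 2 * s * Real.sinh (s * L) / (L * (s ^ 2 + ((n + 1) * π / L) ^ 2))
        * Real.cos ((n + 1) * π * x / L) * Real.cos ((n + 1) * π * y / L))
      (Real.cosh (s * (L - x)) * Real.cosh (s * y) - Real.sinh (s * L) / (s * L)) := by
  have h2L : 0 < 2 * L := by positivity
  have hdiff := hasSum_coshFourierCoeff_mul_cos h2L hs (u := x - y) ⟨by linarith, by linarith⟩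
  have hsum := hasSum_coshFourierCoeff_mul_cos h2L hs (u := x + y) ⟨by linarith, by linarith⟩
  convert (hdiff.add hsum).div_const 2 using 1
  · rfl
  · funext n
    simp only [Int.cast_add, Int.cast_natCast, Int.cast_one, coshFourierCoeff,
      mul_sub, mul_add, sub_div, add_div, Real.cos_sub, Real.cos_add]
    field_simp
    ring
  · rw [show s * (2 * L / 2 - (x - y)) = s * (L - x) + s * y by ring,
      show s * (2 * L / 2 - (x + y)) = s * (L - x) - s * y by ring,
      Real.cosh_add, Real.cosh_sub, coshFourierCoeff]
    field_simp
    ring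

/-- Green function identity for Brownian motion on `[-1,1]` reflected at both endpoints. -/
theorem reflected_bm_green (α x y : ℝ) (hα : 0 < α) (h1 : -1 ≤ y) (h2 : y ≤ x) (h3 : x ≤ 1) :
    Real.cosh ((1 - x) * Real.sqrt (2 * α)) * Real.cosh ((1 + y) * Real.sqrt (2 * α)) /
        (Real.sqrt (2 * α) * Real.sinh (2 * Real.sqrt (2 * α)))
    = (1 / 2) * (1 / (2 * α) +
        ∑' n : ℕ, (1 / (α + ((n : ℝ) + 1) ^ 2 * π ^ 2 / 8)) *
          Real.cos (((n : ℝ) + 1) * π * (x + 1) / 2) *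
          Real.cos (((n : ℝ) + 1) * π * (y + 1) / 2)) := by
  set s := √(2 * α)
  have hs : 0 < s := Real.sqrt_pos.2 (by positivity)
  have hs2 : s ^ 2 = 2 * α := Real.sq_sqrt (by positivity)
  have hsinh : 0 < Real.sinh (2 * s) := Real.sinh_pos_iff.2 (by positivity)
  have hgreen := hasSum_cosh_mul_cosh two_pos hs.ne' (x := x + 1) (y := y + 1)
    (by linarith) (by linarith) (by linarith)
  rw [show s * (2 - (x + 1)) = (1 - x) * s by ring, show s * (y + 1) = (1 + y) * s by ring,
    mul_comm s 2] at hgreen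
  rw [show α = s ^ 2 / 2 by linarith,
    ((hgreen.div_const (s * Real.sinh (2 * s) / 2)).congr_fun fun n => ?_).tsum_eq]
  · field_simp
    ring
  · field_simp
    ring
end

section
/- First modular identity for the Jacobi theta function θ₁ (real form): for every real t > 0 and every real z, √t · ∑_{n=0}^∞ (-1)^n · exp(-πt(n+1/2)²) · sin((2n+1)z) = exp(-z²/(πt)) · ∑_{n=0}^∞ (-1)^n · exp(-(π/t)(n+1/2)²) · sinh((2n+1)z/t). -/
/-!
Up to the factor `-i e^{iπτ/4 + iζ}`, `θ₁(ζ | τ)` is Mathlib's `jacobiTheta₂` at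
`w = (τ + 1)/2 + ζ/π`: pairing the terms `n` and `-(n + 1)` of the bilateral series produces
`(-1)ⁿ e^{πiτ(n+1/2)²} (e^{i(2n+1)ζ} - e^{-i(2n+1)ζ})`. The functional equation of `jacobiTheta₂`
sends `w` to `w/τ = 1 - w'`, where `w'` is the corresponding point for `(ζτ', τ')`, `τ' = -1/τ`;
evenness and `1`-periodicity of `jacobiTheta₂` in its first variable give back `θ₁(ζτ' | τ')`.
At `τ = it` the argument `ζτ' = iz/t` is imaginary, and `sin(ix) = i sinh x`.
-/

open Real Complex

noncomputable def jacobiTheta₁ (ζ τ : ℂ) : ℂ :=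
  2 * ∑' n : ℕ, (-1) ^ n * cexp (π * I * τ * (n + 1 / 2) ^ 2) * Complex.sin ((2 * n + 1) * ζ)

lemma jacobiTheta₂_term_add_term_neg_succ (n : ℕ) (ζ τ : ℂ) :
    cexp (π * I * τ / 4 + I * ζ) * (jacobiTheta₂_term n ((τ + 1) / 2 + ζ / π) τ
      + jacobiTheta₂_term (-(n + 1)) ((τ + 1) / 2 + ζ / π) τ)
    = 2 * I * ((-1) ^ n * cexp (π * I * τ * (n + 1 / 2) ^ 2) * Complex.sin ((2 * n + 1) * ζ)) := by
  have hsign (k : ℕ) : cexp (k * (π * I)) = (-1) ^ k := by rw [Complex.exp_nat_mul, exp_pi_mul_I]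
  have hexp_n : π * I * τ / 4 + I * ζ + (2 * π * I * ((n : ℤ) : ℂ) * ((τ + 1) / 2 + ζ / π)
        + π * I * ((n : ℤ) : ℂ) ^ 2 * τ)
      = π * I * τ * (n + 1 / 2) ^ 2 + (2 * n + 1) * ζ * I + (n : ℕ) * (π * I) := by
    push_cast
    field_simp
    ring
  have hexp_neg_succ : π * I * τ / 4 + I * ζ
      + (2 * π * I * ((-(n + 1) : ℤ) : ℂ) * ((τ + 1) / 2 + ζ / π)
        + π * I * ((-(n + 1) : ℤ) : ℂ) ^ 2 * τ)
      = π * I * τ * (n + 1 / 2) ^ 2 + -((2 * n + 1) * ζ) * I + (n + 1 : ℕ) * (π * I)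
        + ((-(n + 1) : ℤ) : ℂ) * (2 * π * I) := by
    push_cast
    field_simp
    ring
  rw [mul_add, jacobiTheta₂_term, jacobiTheta₂_term, ← Complex.exp_add, ← Complex.exp_add,
    hexp_n, hexp_neg_succ]
  simp only [Complex.exp_add, exp_int_mul_two_pi_mul_I, hsign, Complex.sin, pow_succ]
  ring_nf
  rw [I_sq]
  ring

lemma jacobiTheta₁_eq_jacobiTheta₂ (ζ : ℂ) {τ : ℂ} (hτ : 0 < τ.im) :
    jacobiTheta₁ ζ τ
      = -I * cexp (π * I * τ / 4 + I * ζ) * jacobiTheta₂ ((τ + 1) / 2 + ζ / π) τ := by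
  have hs : Summable (fun k : ℤ => jacobiTheta₂_term k ((τ + 1) / 2 + ζ / π) τ) :=
    (summable_jacobiTheta₂_term_iff _ _).mpr hτ
  rw [mul_assoc, jacobiTheta₂, ← tsum_nat_add_neg_add_one hs, ← tsum_mul_left]
  simp only [jacobiTheta₂_term_add_term_neg_succ, tsum_mul_left, jacobiTheta₁]
  generalize (∑' n : ℕ, (_ : ℂ)) = S
  linear_combination 2 * S * I_sq

lemma im_neg_one_div_pos {τ : ℂ} (hτ : 0 < τ.im) : 0 < (-1 / τ).im := by
  rw [div_eq_mul_inv, neg_one_mul, neg_im, inv_im, neg_div, neg_neg]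
  exact div_pos hτ (normSq_pos.mpr (fun h ↦ lt_irrefl 0 (zero_im ▸ h ▸ hτ)))

theorem jacobiTheta₁_functional_equation (ζ : ℂ) {τ : ℂ} (hτ : 0 < τ.im) :
    (-I * τ) ^ (1 / 2 : ℂ) * jacobiTheta₁ ζ τ
      = -I * cexp (I * (-1 / τ) * ζ ^ 2 / π) * jacobiTheta₁ (ζ * (-1 / τ)) (-1 / τ) := by
  have hτ0 : τ ≠ 0 := fun h ↦ by simp [h] at hτ
  have hsqrt : (-I * τ) ^ (1 / 2 : ℂ) ≠ 0 := by simp [hτ0, I_ne_zero]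
  have harg : ((τ + 1) / 2 + ζ / π) / τ = -((-1 / τ + 1) / 2 + ζ * (-1 / τ) / π) + 1 := by
    field_simp
    ring
  have hexp : π * I * τ / 4 + I * ζ + -π * I * ((τ + 1) / 2 + ζ / π) ^ 2 / τ
      = -π / 2 * I + (I * (-1 / τ) * ζ ^ 2 / π + (π * I * (-1 / τ) / 4 + I * (ζ * (-1 / τ)))) := by
    field_simp
    ring
  rw [jacobiTheta₁_eq_jacobiTheta₂ ζ hτ, jacobiTheta₁_eq_jacobiTheta₂ _ (im_neg_one_div_pos hτ),
    jacobiTheta₂_functional_equation, harg, jacobiTheta₂_add_left, jacobiTheta₂_neg_left]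
  have hcoef : cexp (π * I * τ / 4 + I * ζ) * cexp (-π * I * ((τ + 1) / 2 + ζ / π) ^ 2 / τ)
      = -I * cexp (I * (-1 / τ) * ζ ^ 2 / π)
        * cexp (π * I * (-1 / τ) / 4 + I * (ζ * (-1 / τ))) := by
    rw [← Complex.exp_add, hexp, Complex.exp_add, Complex.exp_add, exp_neg_pi_div_two_mul_I]
    ring
  generalize jacobiTheta₂ ((-1 / τ + 1) / 2 + ζ * (-1 / τ) / π) (-1 / τ) = θ at *
  linear_combination (-I * θ) * hcoef + (-I * cexp (π * I * τ / 4 + I * ζ)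
    * cexp (-π * I * ((τ + 1) / 2 + ζ / π) ^ 2 / τ) * θ) * mul_one_div_cancel hsqrt

lemma mul_I_mul_mul_I (a b : ℂ) : a * I * (b * I) = -a * b := by
  linear_combination a * b * I_sq

lemma jacobiTheta₁_ofReal_ofReal_mul_I (z t : ℝ) :
    jacobiTheta₁ z (t * I) = 2 * ↑(∑' n : ℕ, (-1 : ℝ) ^ n * rexp (-π * t * (n + 1 / 2) ^ 2)
      * Real.sin ((2 * n + 1) * z)) := by
  rw [jacobiTheta₁, ofReal_tsum]
  congr 1
  refine tsum_congr fun n ↦ ?_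
  push_cast
  rw [mul_I_mul_mul_I]

lemma neg_I_mul_jacobiTheta₁_ofReal_mul_I_ofReal_mul_I (z t : ℝ) :
    -I * jacobiTheta₁ (z * I) (t * I) = 2 * ↑(∑' n : ℕ, (-1 : ℝ) ^ n
      * rexp (-π * t * (n + 1 / 2) ^ 2) * Real.sinh ((2 * n + 1) * z)) := by
  rw [jacobiTheta₁, mul_left_comm, ofReal_tsum, ← tsum_mul_left]
  congr 1
  refine tsum_congr fun n ↦ ?_
  push_cast
  rw [mul_I_mul_mul_I, ← mul_assoc (2 * (n : ℂ) + 1), Complex.sin_mul_I]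
  linear_combination -(-1 : ℂ) ^ n * cexp (-π * t * (n + 1 / 2) ^ 2)
    * Complex.sinh ((2 * n + 1) * z) * I_sq

lemma ofReal_cpow_one_half {t : ℝ} (ht : 0 ≤ t) : (t : ℂ) ^ (1 / 2 : ℂ) = √t := by
  rw [sqrt_eq_rpow, ofReal_cpow ht]
  push_cast
  rfl

/-- First modular identity for the Jacobi theta function `θ₁`, real form. -/
theorem theta1_modular (t z : ℝ) (ht : 0 < t) :
    Real.sqrt t *
      ∑' n : ℕ, (-1 : ℝ) ^ n * Real.exp (-π * t * ((n : ℝ) + 1 / 2) ^ 2) *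
        Real.sin ((2 * (n : ℝ) + 1) * z)
    = Real.exp (-z ^ 2 / (π * t)) *
      ∑' n : ℕ, (-1 : ℝ) ^ n * Real.exp (-(π / t) * ((n : ℝ) + 1 / 2) ^ 2) *
        Real.sinh ((2 * (n : ℝ) + 1) * z / t) := by
  have ht0 : (t : ℂ) ≠ 0 := ofReal_ne_zero.mpr ht.ne'
  have hτ : 0 < ((t : ℂ) * I).im := by simpa using ht
  have hscale : -I * (t * I) = t := by linear_combination (-t : ℂ) * I_sq
  have hτ' : -1 / (t * I) = ((t⁻¹ : ℝ) : ℂ) * I := by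
    push_cast
    field_simp
    linear_combination -I_sq
  have hζ' : (z : ℂ) * ((t⁻¹ : ℝ) * I) = (z / t : ℝ) * I := by push_cast; ring
  have hfactor : cexp (I * (((t⁻¹ : ℝ) : ℂ) * I) * z ^ 2 / π) = rexp (-z ^ 2 / (π * t)) := by
    rw [ofReal_exp]
    congr 1
    push_cast
    field_simp
    linear_combination (z : ℂ) ^ 2 * I_sq
  have h := jacobiTheta₁_functional_equation (z : ℂ) hτ
  rw [hscale, hτ', hζ', mul_right_comm (-I), hfactor, ofReal_cpow_one_half ht.le,
    jacobiTheta₁_ofReal_ofReal_mul_I, neg_I_mul_jacobiTheta₁_ofReal_mul_I_ofReal_mul_I] at h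
  simp only [← div_eq_mul_inv, neg_div, ← mul_div_assoc] at h ⊢
  apply ofReal_injective
  rw [ofReal_mul, ofReal_mul]
  linear_combination h / 2
end

section
/- Second modular identity for the Jacobi theta functions θ₂ and θ₄ (real form): for every real t > 0 and every real z, √t · ∑_{n∈ℤ} exp(-πt(n+1/2)²) · cos((2n+1)z) = ∑_{n∈ℤ} (-1)^n · exp(-(z+πn)²/(πt)). -/
open Real

open Complex


noncomputable def gg (t z : ℝ) (n : ℤ) : ℂ :=
  cexp ((-π * t * ((n : ℝ) + 1 / 2) ^ 2 : ℝ) - ((2 * (n : ℝ) + 1) * z : ℝ) * I)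

lemma L3 (t z : ℝ) (n : ℤ) :
    gg t z n = cexp (-(π:ℂ) * t / 4 - z * I) *
      jacobiTheta₂_term n (-(z:ℂ)/π + (t/2) * I) (I * t) := by
  rw [gg, jacobiTheta₂_term, ← Complex.exp_add]
  congr 1
  have hπ : (π:ℂ) ≠ 0 := by exact_mod_cast Real.pi_ne_zero
  push_cast
  field_simp
  ring_nf
  simp [Complex.I_sq]
  ring

lemma L1 (t z : ℝ) (n : ℤ) :
    gg t z n = cexp (-(π:ℂ) * t / 4 - z * I) *
      cexp (-π * (t:ℂ) * (n:ℂ) ^ 2 + 2 * π * (-(z:ℂ) * I / π - t / 2) * (n:ℂ)) := by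
  rw [gg, ← Complex.exp_add]
  congr 1
  have hπ : (π:ℂ) ≠ 0 := by exact_mod_cast Real.pi_ne_zero
  push_cast
  field_simp
  ring

lemma L2 (t z : ℝ) (ht : 0 < t) (n : ℤ) :
    cexp (-(π:ℂ) / t * ((n:ℂ) + I * (-(z:ℂ) * I / π - t / 2)) ^ 2) =
      cexp ((π:ℂ) * t / 4 + z * I) *
        ((-1 : ℂ) ^ n * (Real.exp (-(z + π * (n : ℝ)) ^ 2 / (π * t)) : ℝ)) := by
  rw [← Complex.exp_pi_mul_I, ← Complex.exp_int_mul, Complex.ofReal_exp, ← Complex.exp_add,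
    ← Complex.exp_add]
  congr 1
  have hπ : (π:ℂ) ≠ 0 := by exact_mod_cast Real.pi_ne_zero
  have ht0 : (t:ℂ) ≠ 0 := by exact_mod_cast ht.ne'
  push_cast
  field_simp
  ring_nf
  simp only [show (I:ℂ)^3 = -I from by rw [pow_succ, Complex.I_sq]; ring, Complex.I_sq,
    Complex.I_pow_four]
  ring_nf


open Complex

/-- Second modular identity for the Jacobi theta functions `θ₂` and `θ₄`, real form. -/
theorem theta2_modular (t z : ℝ) (ht : 0 < t) :
    Real.sqrt t *
      ∑' n : ℤ, Real.exp (-π * t * ((n : ℝ) + 1 / 2) ^ 2) * Real.cos ((2 * (n : ℝ) + 1) * z)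
    = ∑' n : ℤ, (-1 : ℝ) ^ n * Real.exp (-(z + π * (n : ℝ)) ^ 2 / (π * t)) := by
  have hsq : (0:ℝ) < Real.sqrt t := Real.sqrt_pos.mpr ht
  have hsqC : ((Real.sqrt t : ℝ) : ℂ) ≠ 0 := by exact_mod_cast hsq.ne'
  have hg : Summable (gg t z) := by
    have h := (summable_jacobiTheta₂_term_iff (-(z:ℂ)/π + (t/2) * I) (I * t)).mpr
      (by simpa using ht)
    exact (h.mul_left (cexp (-(π:ℂ) * t / 4 - z * I))).congr fun n => (L3 t z n).symm
  have htre : 0 < (t:ℂ).re := by simpa using ht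
  have hts : ((Real.sqrt t : ℝ) : ℂ) = (t:ℂ) ^ (1/2 : ℂ) := by
    rw [show (Real.sqrt t) = t ^ (1/2 : ℝ) from Real.sqrt_eq_rpow t,
      Complex.ofReal_cpow ht.le]
    norm_num
  have e1 : (∑' n : ℤ, gg t z n) = cexp (-(π:ℂ) * t / 4 - z * I) *
      ∑' n : ℤ, cexp (-π * (t:ℂ) * (n:ℂ) ^ 2 + 2 * π * (-(z:ℂ) * I / π - t / 2) * (n:ℂ)) :=
    (tsum_congr (L1 t z)).trans tsum_mul_left
  have e3 : (∑' n : ℤ, cexp (-(π:ℂ) / t * ((n:ℂ) + I * (-(z:ℂ) * I / π - t / 2)) ^ 2)) =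
      cexp ((π:ℂ) * t / 4 + z * I) *
      ∑' n : ℤ, ((-1 : ℂ) ^ n * (Real.exp (-(z + π * (n : ℝ)) ^ 2 / (π * t)) : ℝ)) :=
    (tsum_congr (L2 t z ht)).trans tsum_mul_left
  have hc : cexp (-(π:ℂ) * t / 4 - z * I) * cexp ((π:ℂ) * t / 4 + z * I) = 1 := by
    rw [← Complex.exp_add, show (-(π:ℂ) * t / 4 - z * I) + ((π:ℂ) * t / 4 + z * I) = 0 by ring,
      Complex.exp_zero]
  have key : ((Real.sqrt t : ℝ) : ℂ) * ∑' n : ℤ, gg t z n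
      = ∑' n : ℤ, ((-1 : ℂ) ^ n * (Real.exp (-(z + π * (n : ℝ)) ^ 2 / (π * t)) : ℝ)) := by
    rw [e1, Complex.tsum_exp_neg_quadratic htre, e3, ← hts]
    calc ((Real.sqrt t : ℝ) : ℂ) * (cexp (-(π:ℂ) * t / 4 - z * I) *
        (1 / ((Real.sqrt t : ℝ) : ℂ) * (cexp ((π:ℂ) * t / 4 + z * I) *
        ∑' n : ℤ, ((-1 : ℂ) ^ n * (Real.exp (-(z + π * (n : ℝ)) ^ 2 / (π * t)) : ℝ)))))
        = (cexp (-(π:ℂ) * t / 4 - z * I) * cexp ((π:ℂ) * t / 4 + z * I)) *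
          ((((Real.sqrt t : ℝ) : ℂ) * (((Real.sqrt t : ℝ) : ℂ))⁻¹) *
          ∑' n : ℤ, ((-1 : ℂ) ^ n * (Real.exp (-(z + π * (n : ℝ)) ^ 2 / (π * t)) : ℝ))) := by
          rw [one_div]; ring
      _ = _ := by rw [hc, mul_inv_cancel₀ hsqC, one_mul, one_mul]
  have := congrArg Complex.re key
  rw [Complex.re_ofReal_mul, Complex.re_tsum hg] at this
  have hterm : ∀ n : ℤ, (gg t z n).re
      = Real.exp (-π * t * ((n : ℝ) + 1/2) ^ 2) * Real.cos ((2 * (n : ℝ) + 1) * z) := by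
    intro n
    have h1 : (((-π * t * ((n : ℝ) + 1/2) ^ 2 : ℝ) : ℂ)
        - (((2 * (n : ℝ) + 1) * z : ℝ) : ℂ) * I).re = -π * t * ((n : ℝ) + 1/2) ^ 2 := by
      simp only [Complex.sub_re, Complex.ofReal_re, Complex.mul_re, Complex.I_re,
        Complex.ofReal_im, Complex.I_im, mul_zero, zero_mul, mul_one, sub_zero, zero_sub,
        sub_neg_eq_add, add_zero]
    have h2 : (((-π * t * ((n : ℝ) + 1/2) ^ 2 : ℝ) : ℂ)
        - (((2 * (n : ℝ) + 1) * z : ℝ) : ℂ) * I).im = -((2 * (n : ℝ) + 1) * z) := by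
      simp only [Complex.sub_im, Complex.ofReal_im, Complex.mul_im, Complex.I_im,
        Complex.ofReal_re, Complex.I_re, mul_zero, zero_mul, mul_one, add_zero, zero_sub,
        zero_add]
    rw [gg, Complex.exp_re, h1, h2, Real.cos_neg]
  rw [tsum_congr hterm] at this
  have hRHS : (∑' n : ℤ, ((-1 : ℂ) ^ n *
      (Real.exp (-(z + π * (n : ℝ)) ^ 2 / (π * t)) : ℝ))).re
      = ∑' n : ℤ, (-1 : ℝ) ^ n * Real.exp (-(z + π * (n : ℝ)) ^ 2 / (π * t)) := by
    rw [show (∑' n : ℤ, ((-1 : ℂ) ^ n *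
        (Real.exp (-(z + π * (n : ℝ)) ^ 2 / (π * t)) : ℝ)))
        = ((∑' n : ℤ, (-1 : ℝ) ^ n * Real.exp (-(z + π * (n : ℝ)) ^ 2 / (π * t)) : ℝ) : ℂ) from by
      rw [Complex.ofReal_tsum]; exact tsum_congr fun n => by push_cast; ring]
    exact Complex.ofReal_re _
  rw [hRHS] at this
  exact this
end

section
/- Fourth modular identity for the Jacobi theta functions θ₄ and θ₂ (real form): for every real t > 0 and every real z, √t · ∑_{n∈ℤ} (-1)^n · exp(-πn²t) · cos(2nz) = ∑_{n∈ℤ} exp(-(z+π(n+1/2))²/(πt)). -/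
/-!
Poisson summation for the Gaussian `exp (-π a x²)` (`Complex.tsum_exp_neg_quadratic`), taken with
an imaginary linear term and then real parts, gives
`∑ exp (-π a n²) cos (2π x n) = a^(-1/2) ∑ exp (-π (n + x)² / a)`.
The sign `(-1)ⁿ` is a shift of the frequency by one half, so the theorem is the case
`a = t`, `x = z / π + 1 / 2`.
-/

open Real

open Complex in
theorem Real.tsum_exp_neg_mul_int_sq_mul_cos {a : ℝ} (ha : 0 < a) (x : ℝ) :
    ∑' n : ℤ, rexp (-π * a * n ^ 2) * Real.cos (2 * π * x * n) =
      1 / √a * ∑' n : ℤ, rexp (-π / a * (n + x) ^ 2) := by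
  set f : ℤ → ℂ := fun n ↦ cexp (-π * a * n ^ 2 + 2 * π * (-I * x) * n)
  have hsum : Summable f := by
    refine ((summable_jacobiTheta₂_term_iff (-x) (I * a)).mpr (by simpa using ha)).congr
      fun n ↦ congrArg cexp ?_
    linear_combination (π * a * n ^ 2 : ℂ) * I_sq
  have hre (n : ℤ) : (f n).re = rexp (-π * a * n ^ 2) * Real.cos (2 * π * x * n) := by
    simp [f, exp_re, ← ofReal_intCast, ← ofReal_pow]
  have hsqrt : (a : ℂ) ^ (1 / 2 : ℂ) = √a := by
    rw [Real.sqrt_eq_rpow, ofReal_cpow ha.le]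
    norm_num
  have hrhs :
      1 / (a : ℂ) ^ (1 / 2 : ℂ) * ∑' n : ℤ, cexp (-π / a * (n + I * (-I * x)) ^ 2) =
      ↑(1 / √a * ∑' n : ℤ, rexp (-π / a * (n + x) ^ 2)) := by
    have (n : ℤ) : (n : ℂ) + I * (-I * x) = ↑((n : ℝ) + x) := by
      push_cast; linear_combination (-x : ℂ) * I_sq
    simp only [this, hsqrt, ofReal_mul, ofReal_div, ofReal_one, ofReal_tsum, ofReal_exp,
      ofReal_pow, ofReal_neg]
  calc ∑' n : ℤ, rexp (-π * a * n ^ 2) * Real.cos (2 * π * x * n)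
      = (∑' n, f n).re := by rw [re_tsum hsum]; exact tsum_congr fun n ↦ (hre n).symm
    _ = _ := by rw [Complex.tsum_exp_neg_quadratic (by simpa using ha), hrhs, ofReal_re]

/-- Fourth modular identity for the Jacobi theta functions `θ₄` and `θ₂`, real form. -/
theorem theta4_modular (t z : ℝ) (ht : 0 < t) :
    Real.sqrt t *
      ∑' n : ℤ, (-1 : ℝ) ^ n * Real.exp (-π * (n : ℝ) ^ 2 * t) * Real.cos (2 * (n : ℝ) * z)
    = ∑' n : ℤ, Real.exp (-(z + π * ((n : ℝ) + 1 / 2)) ^ 2 / (π * t)) := by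
  have hcos (n : ℤ) :
      (-1 : ℝ) ^ n * Real.cos (2 * n * z) = Real.cos (2 * π * (z / π + 1 / 2) * n) := by
    rw [← cos_add_int_mul_pi]
    congr 1
    field_simp
  have hexp (n : ℤ) : rexp (-π / t * (n + (z / π + 1 / 2)) ^ 2) =
      rexp (-(z + π * (n + 1 / 2)) ^ 2 / (π * t)) := by
    congr 1
    field_simp
    ring
  calc √t * ∑' n : ℤ, (-1 : ℝ) ^ n * rexp (-π * n ^ 2 * t) * Real.cos (2 * n * z)
      = √t * ∑' n : ℤ, rexp (-π * t * n ^ 2) * Real.cos (2 * π * (z / π + 1 / 2) * n) := by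
        congr 1
        exact tsum_congr fun n ↦ by rw [← hcos, mul_right_comm (-π)]; ring
    _ = ∑' n : ℤ, rexp (-(z + π * (n + 1 / 2)) ^ 2 / (π * t)) := by
        rw [Real.tsum_exp_neg_mul_int_sq_mul_cos ht, ← mul_assoc,
          mul_one_div_cancel (Real.sqrt_pos.mpr ht).ne', one_mul]
        exact tsum_congr hexp
end

section
/- Mittag-Leffler expansion of the hyperbolic tangent: for every real z, tanh z = 8z · ∑_{n=1}^∞ 1/(4z² + (2n-1)²π²). -/
/-!
Euler's partial-fraction expansion of `π cot (π x)`, evaluated at the imaginary point `x = a i / π`,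
gives `coth a = 1 / a + ∑_{n ≥ 1} 2a / (a² + n²π²)`. Since `tanh z = 2 coth (2z) - coth z`, subtracting
the expansion at `z` from twice the one at `2z` cancels the `1 / z` terms together with the
even-indexed terms `8z / (4z² + (2m)²π²)`, and leaves the odd-indexed ones.
-/

open Real

theorem HasSum.even_of_odd {α : Type*} [AddCommGroup α] [UniformSpace α] [IsUniformAddGroup α]
    [CompleteSpace α] [T2Space α] {f : ℕ → α} {s b : α} (hf : HasSum f s)
    (hodd : HasSum (fun k => f (2 * k + 1)) b) : HasSum (fun k => f (2 * k)) (s - b) := by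
  obtain ⟨c, heven⟩ : Summable fun k => f (2 * k) :=
    hf.summable.comp_injective (mul_right_injective₀ two_ne_zero)
  rwa [hf.unique (heven.even_add_odd hodd), add_sub_cancel_right]

theorem hasSum_coth_sub_inv {a : ℝ} (ha : a ≠ 0) :
    HasSum (fun n : ℕ => 2 * a / (a ^ 2 + (n + 1) ^ 2 * π ^ 2)) (cosh a / sinh a - 1 / a) := by
  set x : ℂ := a * Complex.I / π
  have hx : x ∈ Complex.integerComplement := by
    rintro ⟨n, hn⟩
    have him := congrArg Complex.im hn
    simp [x, eq_div_iff pi_ne_zero] at him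
    exact ha him.symm
  have hterm (n : ℕ) :
      cotTerm x n = -Complex.I * π * ((2 * a / (a ^ 2 + (n + 1) ^ 2 * π ^ 2) : ℝ) : ℂ) := by
    have hd : (a : ℂ) ^ 2 + (n + 1) ^ 2 * π ^ 2 ≠ 0 := by
      exact_mod_cast (by positivity : a ^ 2 + (n + 1) ^ 2 * π ^ 2 ≠ 0)
    rw [cotTerm_identity hx]
    push_cast
    simp only [x]
    field_simp
    rw [show ((a : ℂ) * Complex.I + π * (n + 1)) * (a * Complex.I - π * (n + 1))
        = -(a ^ 2 + π ^ 2 * (n + 1) ^ 2) by linear_combination (a : ℂ) ^ 2 * Complex.I_sq, div_neg]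
  have hlimit :
      π * Complex.cot (π * x) - 1 / x = -Complex.I * π * ((cosh a / sinh a - 1 / a : ℝ) : ℂ) := by
    have hpx : (π : ℂ) * x = a * Complex.I := by simp only [x]; field_simp
    have hs : Complex.sinh a ≠ 0 := by exact_mod_cast sinh_ne_zero.mpr ha
    rw [hpx, Complex.cot_eq_cos_div_sin, Complex.cos_mul_I, Complex.sin_mul_I]
    push_cast
    simp only [x]
    field_simp
    rw [Complex.I_sq]
    ring
  have hcot := (summable_cotTerm hx).hasSum
  rw [← cot_series_rep' hx, funext hterm, hlimit,
    hasSum_mul_left_iff (by simp [pi_ne_zero])] at hcot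
  exact Complex.hasSum_ofReal.mp hcot

theorem tanh_eq_two_mul_coth_two_mul_sub_coth {z : ℝ} (hz : z ≠ 0) :
    tanh z = 2 * (cosh (2 * z) / sinh (2 * z)) - cosh z / sinh z := by
  have hs : sinh z ≠ 0 := sinh_ne_zero.mpr hz
  have hc : cosh z ≠ 0 := (cosh_pos z).ne'
  rw [tanh_eq_sinh_div_cosh, cosh_two_mul, sinh_two_mul]
  field_simp
  ring

/-- Mittag-Leffler expansion of the hyperbolic tangent. -/
theorem tanh_mittag_leffler (z : ℝ) :
    Real.tanh z
      = 8 * z * ∑' n : ℕ, 1 / (4 * z ^ 2 + (2 * ((n : ℝ) + 1) - 1) ^ 2 * π ^ 2) := by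
  rcases eq_or_ne z 0 with rfl | hz
  · simp
  set f : ℕ → ℝ := fun n => 8 * z / (4 * z ^ 2 + (n + 1) ^ 2 * π ^ 2)
  have hall : HasSum f (2 * (cosh (2 * z) / sinh (2 * z) - 1 / (2 * z))) := by
    refine ((hasSum_coth_sub_inv (mul_ne_zero two_ne_zero hz)).mul_left 2).congr_fun fun n => ?_
    simp only [f]
    ring
  have hodd : HasSum (fun k => f (2 * k + 1)) (cosh z / sinh z - 1 / z) := by
    refine (hasSum_coth_sub_inv hz).congr_fun fun k => ?_
    have hd : 0 < z ^ 2 + (k + 1) ^ 2 * π ^ 2 := by positivity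
    simp only [f]
    push_cast
    field_simp
    ring
  have hvalue : 2 * (cosh (2 * z) / sinh (2 * z) - 1 / (2 * z)) - (cosh z / sinh z - 1 / z)
      = tanh z := by
    rw [tanh_eq_two_mul_coth_two_mul_sub_coth hz]
    field_simp
    ring
  rw [← hvalue, ← (hall.even_of_odd hodd).tsum_eq, ← tsum_mul_left]
  congr with k
  simp only [f]
  push_cast
  ring
end

section
/- For every real t > 0, the following identity holds: (π/4) · ∑_{n∈ℤ} (-1)^n (2n+1) · exp(-(2n+1)²π²t/8) = (1/√(2πt³)) · ∑_{n∈ℤ} (-1)^n (2n+1) · exp(-(2n+1)²/(2t)). -/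
/-!
With `q = e^{πiτ}`, the point `z = (1 + τ)/2` is a zero of the Jacobi theta function
`θ(z, τ) = ∑ e^{2πinz} q^{n²}`, and there `θ'(z, τ)` is a multiple of
`θ₁'(0 | τ) = ∑_{n ∈ ℤ} (-1)ⁿ (2n+1) q^{(n+1/2)²}`. Since `θ` vanishes, the modular transformation
of `θ'` at that point has no `θ` term and becomes `θ₁'(0 | -1/τ) = (-iτ)^{3/2} θ₁'(0 | τ)`.
At `τ = iπt/2` the two sides are the two real series of the theorem.
-/

open Real Complex

lemma jacobiTheta₂_one_sub (z τ : ℂ) : jacobiTheta₂ (1 - z) τ = jacobiTheta₂ z τ := by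
  rw [show 1 - z = -(z - 1) by ring, jacobiTheta₂_neg_left, ← jacobiTheta₂_add_left,
    sub_add_cancel]

lemma jacobiTheta₂'_one_sub (z τ : ℂ) : jacobiTheta₂' (1 - z) τ = -jacobiTheta₂' z τ := by
  rw [show 1 - z = -(z - 1) by ring, jacobiTheta₂'_neg_left, ← jacobiTheta₂'_add_left,
    sub_add_cancel]

lemma jacobiTheta₂_half_add_half_eq_zero (τ : ℂ) : jacobiTheta₂ ((1 + τ) / 2) τ = 0 := by
  have h := jacobiTheta₂_add_left' ((1 - τ) / 2) τ
  rw [show (1 - τ) / 2 + τ = (1 + τ) / 2 by ring, show (1 - τ) / 2 = 1 - (1 + τ) / 2 by ring,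
    jacobiTheta₂_one_sub, show -π * I * (τ + 2 * (1 - (1 + τ) / 2)) = -(π * I) by ring,
    Complex.exp_neg, exp_pi_mul_I] at h
  linear_combination h / 2

/-- `θ₁'(0 | τ)` for `θ₁(z | τ) = 2 ∑_{n ≥ 0} (-1)ⁿ e^{πiτ(n+1/2)²} sin((2n+1)z)`. -/
noncomputable def jacobiTheta₁DerivZero (τ : ℂ) : ℂ :=
  ∑' n : ℤ, (-1 : ℂ) ^ n * (2 * n + 1) * cexp (π * I * τ * (n + 1 / 2) ^ 2)

lemma jacobiTheta₂'_half_add_half {τ : ℂ} (hτ : 0 < τ.im) :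
    jacobiTheta₂' ((1 + τ) / 2) τ = π * I * cexp (-(π * I * τ) / 4) * jacobiTheta₁DerivZero τ := by
  have h := (hasSum_jacobiTheta₂'_term ((1 + τ) / 2) hτ).add
    ((hasSum_jacobiTheta₂_term ((1 + τ) / 2) hτ).mul_left (π * I))
  rw [jacobiTheta₂_half_add_half_eq_zero, mul_zero, add_zero] at h
  rw [← h.tsum_eq, jacobiTheta₁DerivZero, ← tsum_mul_left]
  refine tsum_congr fun n => ?_
  have hterm : jacobiTheta₂_term n ((1 + τ) / 2) τ
      = (-1 : ℂ) ^ n * cexp (π * I * τ * (n + 1 / 2) ^ 2) * cexp (-(π * I * τ) / 4) := by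
    rw [← exp_pi_mul_I, ← exp_int_mul, ← Complex.exp_add, ← Complex.exp_add, jacobiTheta₂_term]
    ring_nf
  rw [jacobiTheta₂'_term, hterm]
  ring

lemma jacobiTheta₁DerivZero_neg_inv {τ : ℂ} (hτ : 0 < τ.im) :
    jacobiTheta₁DerivZero (-1 / τ) = (-I * τ) ^ (3 / 2 : ℂ) * jacobiTheta₁DerivZero τ := by
  have hτ0 : τ ≠ 0 := by rintro rfl; simp at hτ
  have hτ' : 0 < (-1 / τ).im := by
    rw [neg_div, neg_im, one_div, inv_im, neg_div, neg_neg]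
    exact div_pos hτ (normSq_pos.mpr hτ0)
  have hfe := jacobiTheta₂'_functional_equation ((1 + τ) / 2) τ
  rw [show (1 + τ) / 2 / τ = 1 - (1 + -1 / τ) / 2 by field_simp; ring, jacobiTheta₂_one_sub,
    jacobiTheta₂_half_add_half_eq_zero, jacobiTheta₂'_one_sub, jacobiTheta₂'_half_add_half hτ,
    jacobiTheta₂'_half_add_half hτ', mul_zero, sub_zero] at hfe
  have hexp : cexp (-π * I * ((1 + τ) / 2) ^ 2 / τ) * cexp (-(π * I * (-1 / τ)) / 4)
      = -I * cexp (-(π * I * τ) / 4) := by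
    rw [← Complex.exp_add, show -π * I * ((1 + τ) / 2) ^ 2 / τ + -(π * I * (-1 / τ)) / 4
      = -(π / 2 * I) + -(π * I * τ) / 4 by field_simp; ring, Complex.exp_add, Complex.exp_neg,
      exp_pi_div_two_mul_I, inv_I]
  have hpow : (-I * τ) ^ (3 / 2 : ℂ) = (-I * τ) * (-I * τ) ^ (1 / 2 : ℂ) := by
    rw [show (3 / 2 : ℂ) = 1 + 1 / 2 by norm_num, cpow_add _ _ (by simpa using hτ0), cpow_one]
  have hs : (-I * τ) ^ (1 / 2 : ℂ) ≠ 0 := by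
    rw [Ne, cpow_eq_zero_iff]; simp [hτ0]
  have hE : cexp (-(π * I * τ) / 4) ≠ 0 := Complex.exp_ne_zero _
  rw [hpow]
  generalize cexp (-π * I * ((1 + τ) / 2) ^ 2 / τ) = X at hfe hexp
  generalize cexp (-(π * I * (-1 / τ)) / 4) = E' at hfe hexp
  generalize cexp (-(π * I * τ) / 4) = E at hfe hexp hE
  generalize (-I * τ) ^ (1 / 2 : ℂ) = s at hfe hs ⊢
  generalize jacobiTheta₁DerivZero (-1 / τ) = O' at hfe ⊢
  field_simp at hfe
  rw [hexp] at hfe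
  apply mul_left_cancel₀ hE
  linear_combination I * hfe + E * O' * I_sq

lemma jacobiTheta₁DerivZero_ofReal_mul_I (a : ℝ) :
    jacobiTheta₁DerivZero (a * I)
      = ((∑' n : ℤ, (-1 : ℝ) ^ n * (2 * n + 1) * rexp (-π * a * (n + 1 / 2) ^ 2) : ℝ) : ℂ) := by
  rw [ofReal_tsum, jacobiTheta₁DerivZero]
  refine tsum_congr fun n => ?_
  push_cast
  congr 2
  linear_combination (π * a * (n + 1 / 2) ^ 2 : ℂ) * I_sq

lemma tsum_alternating_odd_gaussian_inv {a : ℝ} (ha : 0 < a) :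
    ∑' n : ℤ, (-1 : ℝ) ^ n * (2 * n + 1) * rexp (-π * a⁻¹ * (n + 1 / 2) ^ 2)
      = a ^ (3 / 2 : ℝ) *
          ∑' n : ℤ, (-1 : ℝ) ^ n * (2 * n + 1) * rexp (-π * a * (n + 1 / 2) ^ 2) := by
  have h := jacobiTheta₁DerivZero_neg_inv (τ := a * I) (by simpa using ha)
  have hinv : -1 / (a * I) = (a⁻¹ : ℝ) * I := by field_simp; simp
  have hscale : -I * (a * I) = (a : ℂ) := by linear_combination -(a : ℂ) * I_sq
  rw [hinv, hscale, jacobiTheta₁DerivZero_ofReal_mul_I, jacobiTheta₁DerivZero_ofReal_mul_I,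
    show (3 / 2 : ℂ) = ((3 / 2 : ℝ) : ℂ) by norm_num, ← ofReal_cpow ha.le] at h
  exact_mod_cast h

lemma rpow_three_halves_pi_mul_div_two {t : ℝ} (ht : 0 < t) :
    (π * t / 2) ^ (3 / 2 : ℝ) = π / 4 * √(2 * π * t ^ 3) :=
  calc (π * t / 2) ^ (3 / 2 : ℝ) = √((π * t / 2) ^ 3) := by
        rw [Real.sqrt_eq_rpow, ← Real.rpow_natCast, ← Real.rpow_mul (by positivity)]
        norm_num
    _ = √((π / 4) ^ 2 * (2 * π * t ^ 3)) := by ring_nf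
    _ = π / 4 * √(2 * π * t ^ 3) := by
        rw [Real.sqrt_mul (by positivity), Real.sqrt_sq (by positivity)]

/-- Modular identity for the density of the first exit time of Brownian motion from `(-1,1)`,
i.e. the derivative at `z = 0` of the first modular identity for `θ₁`. -/
theorem exit_time_density_modular (t : ℝ) (ht : 0 < t) :
    (π / 4) *
      ∑' n : ℤ, (-1 : ℝ) ^ n * (2 * (n : ℝ) + 1) *
        Real.exp (-(2 * (n : ℝ) + 1) ^ 2 * π ^ 2 * t / 8)
    = (1 / Real.sqrt (2 * π * t ^ 3)) *
      ∑' n : ℤ, (-1 : ℝ) ^ n * (2 * (n : ℝ) + 1) *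
        Real.exp (-(2 * (n : ℝ) + 1) ^ 2 / (2 * t)) := by
  have hL : ∀ n : ℤ, -(2 * (n : ℝ) + 1) ^ 2 * π ^ 2 * t / 8 = -π * (π * t / 2) * (n + 1 / 2) ^ 2 :=
    fun n => by ring
  have hR : ∀ n : ℤ, -(2 * (n : ℝ) + 1) ^ 2 / (2 * t) = -π * (π * t / 2)⁻¹ * (n + 1 / 2) ^ 2 :=
    fun n => by field_simp
  simp only [hL, hR, tsum_alternating_odd_gaussian_inv (by positivity : 0 < π * t / 2),
    rpow_three_halves_pi_mul_div_two ht]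
  have hs : 0 < √(2 * π * t ^ 3) := by positivity
  rw [mul_comm (π / 4) (√_), mul_assoc (√_), one_div_mul_eq_div, mul_div_cancel_left₀ _ hs.ne']
end

section
/- Moment recursion under modular duality for the discrete Gaussian θ₃-distribution: for c > 0 define the normalized even moments μ_{2j}(c) = ( ∑_{n∈ℤ} n^{2j} e^{-cπn²} ) / ( ∑_{n∈ℤ} e^{-cπn²} ) for nonnegative integers j (with μ₀(c) = 1). Then for every c > 0 and every integer m ≥ 1: c^{2m} · μ_{2m}(c) - (-1)^m · μ_{2m}(1/c) = ∑_{l=1}^{m} ( (2m)! / ( l! · (2m-2l)! ) ) · (-1)^{m-l} · (c/(4π))^l · μ_{2m-2l}(1/c). -/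
open Real

/-- The normalized even moments of the discrete Gaussian `θ₃`-distribution with parameter
`c > 0`: `discreteGaussianMoment c j = μ_{2j}(c)`. -/
noncomputable def discreteGaussianMoment (c : ℝ) (j : ℕ) : ℝ :=
  (∑' n : ℤ, (n : ℝ) ^ (2 * j) * Real.exp (-c * π * (n : ℝ) ^ 2)) /
    (∑' n : ℤ, Real.exp (-c * π * (n : ℝ) ^ 2))

/-!
Write `S j c = ∑ n : ℤ, n ^ (2j) e^{-cπn²}`, so that `S j' = -π S (j + 1)`. Both
`√c c^{2m} S m c` and
`D m c = ∑_{l ≤ m} (-1)^(m-l) (2m)!/(l! (2m-2l)!) (c/4π)^l S (m-l) (1/c)`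
satisfy the same differential recurrence `f m' = (2m + 1/2)/c · f m - π/c² · f (m + 1)`, which
determines `f (m + 1)` from `f m`; for `m = 0` they agree by Jacobi's identity
`S 0 (1/c) = √c S 0 c`. Hence they agree for all `m`, and dividing by `S 0 (1/c) = √c S 0 c`
gives the theorem.
-/

open Set Finset

lemma natCast_mul_pow_sub_one {K : Type*} [DivisionRing K] (n : ℕ) {x : K} (hx : x ≠ 0) :
    n * x ^ (n - 1) = n * x ^ n / x := by
  rcases n with _ | n
  · simp
  · rw [pow_succ, mul_div_assoc, mul_div_cancel_right₀ _ hx, Nat.add_sub_cancel]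

lemma neg_one_pow_add_eq_neg_one_pow_sub {R : Type*} [Ring R] {m l : ℕ} (h : l ≤ m) :
    (-1 : R) ^ (m + l) = (-1) ^ (m - l) := by
  obtain ⟨k, rfl⟩ := Nat.exists_eq_add_of_le h
  rw [Nat.add_sub_cancel_left, show l + k + l = k + 2 * l by ring, pow_add, pow_mul]
  simp

lemma eqOn_of_hasDerivAt_recurrence {𝕜 : Type*} [NontriviallyNormedField 𝕜] {s : Set 𝕜}
    (hs : IsOpen s) {f g a b : ℕ → 𝕜 → 𝕜} (hb : ∀ m, ∀ x ∈ s, b m x ≠ 0)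
    (hf : ∀ m, ∀ x ∈ s, HasDerivAt (f m) (a m x * f m x - b m x * f (m + 1) x) x)
    (hg : ∀ m, ∀ x ∈ s, HasDerivAt (g m) (a m x * g m x - b m x * g (m + 1) x) x)
    (h₀ : EqOn (f 0) (g 0) s) (m : ℕ) : EqOn (f m) (g m) s := by
  induction m with
  | zero => exact h₀
  | succ m ih =>
    intro x hx
    have hderiv := (hf m x hx).unique
      ((hg m x hx).congr_of_eventuallyEq (ih.eventuallyEq_of_mem (hs.mem_nhds hx)))
    rw [ih hx, sub_right_inj] at hderiv
    exact mul_left_cancel₀ (hb m x hx) hderiv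

noncomputable def thetaMomentSum (j : ℕ) (c : ℝ) : ℝ :=
  ∑' n : ℤ, (n : ℝ) ^ (2 * j) * exp (-c * π * (n : ℝ) ^ 2)

lemma discreteGaussianMoment_eq_div (c : ℝ) (j : ℕ) :
    discreteGaussianMoment c j = thetaMomentSum j c / thetaMomentSum 0 c := by
  simp only [discreteGaussianMoment, thetaMomentSum, mul_zero, pow_zero, one_mul]

lemma summable_thetaMomentSum {c : ℝ} (hc : 0 < c) (j : ℕ) :
    Summable fun n : ℤ ↦ (n : ℝ) ^ (2 * j) * exp (-c * π * (n : ℝ) ^ 2) := by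
  convert summable_pow_mul_jacobiTheta₂_term_bound 0 hc (2 * j) using 2 with n
  rw [pow_mul, pow_mul, Int.cast_abs, sq_abs]
  ring_nf

lemma thetaMomentSum_zero_pos {c : ℝ} (hc : 0 < c) : 0 < thetaMomentSum 0 c :=
  (summable_thetaMomentSum hc 0).tsum_pos
    (fun _ ↦ mul_nonneg ((even_two_mul 0).pow_nonneg _) (exp_pos _).le) 0 (by simp)

lemma thetaMomentSum_zero_one_div {c : ℝ} (hc : 0 < c) :
    thetaMomentSum 0 (1 / c) = √c * thetaMomentSum 0 c := by
  have jacobi := tsum_exp_neg_mul_int_sq hc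
  rw [← sqrt_eq_rpow, one_div_mul_eq_div, eq_div_iff (by positivity)] at jacobi
  simp only [thetaMomentSum, mul_zero, pow_zero, one_mul]
  convert jacobi.symm using 1
  · congr! 3
    ring
  · rw [mul_comm]
    congr! 4
    ring

lemma hasDerivAt_thetaMomentSum (j : ℕ) {c : ℝ} (hc : 0 < c) :
    HasDerivAt (thetaMomentSum j) (-π * thetaMomentSum (j + 1) c) c := by
  have hderiv (n : ℤ) (x : ℝ) :
      HasDerivAt (fun y ↦ (n : ℝ) ^ (2 * j) * exp (-y * π * (n : ℝ) ^ 2))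
        (-π * ((n : ℝ) ^ (2 * (j + 1)) * exp (-x * π * (n : ℝ) ^ 2))) x := by
    refine ((((hasDerivAt_neg x).mul_const π).mul_const ((n : ℝ) ^ 2)).exp.const_mul
      ((n : ℝ) ^ (2 * j))).congr_deriv ?_
    ring
  have hbound (n : ℤ) (x : ℝ) (hx : x ∈ Ioi (c / 2)) :
      ‖-π * ((n : ℝ) ^ (2 * (j + 1)) * exp (-x * π * (n : ℝ) ^ 2))‖
        ≤ π * ((n : ℝ) ^ (2 * (j + 1)) * exp (-(c / 2) * π * (n : ℝ) ^ 2)) := by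
    have := (even_two_mul (j + 1)).pow_nonneg (n : ℝ)
    rw [norm_mul, norm_neg, norm_of_nonneg pi_pos.le, norm_of_nonneg (by positivity)]
    gcongr
    exact hx.le
  rw [thetaMomentSum, ← tsum_mul_left]
  exact hasDerivAt_tsum_of_isPreconnected
    ((summable_thetaMomentSum (half_pos hc) (j + 1)).mul_left π) isOpen_Ioi isPreconnected_Ioi
    (fun n x _ ↦ hderiv n x) hbound (half_lt_self hc) (summable_thetaMomentSum hc j)
    (half_lt_self hc)

lemma hasDerivAt_sqrt_mul_pow_mul_thetaMomentSum (m : ℕ) {c : ℝ} (hc : 0 < c) :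
    HasDerivAt (fun x ↦ √x * x ^ (2 * m) * thetaMomentSum m x)
      ((2 * m + 1 / 2) / c * (√c * c ^ (2 * m) * thetaMomentSum m c) -
        π / c ^ 2 * (√c * c ^ (2 * (m + 1)) * thetaMomentSum (m + 1) c)) c := by
  refine (((hasDerivAt_sqrt hc.ne').fun_mul (hasDerivAt_pow (2 * m) c)).fun_mul
    (hasDerivAt_thetaMomentSum m hc)).congr_deriv ?_
  have := sqrt_pos.2 hc
  rw [natCast_mul_pow_sub_one _ hc.ne']
  field_simp
  rw [sq_sqrt hc.le]
  push_cast
  ring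

lemma hasDerivAt_div_pow_mul_thetaMomentSum_one_div (l j : ℕ) {c : ℝ} (hc : 0 < c) :
    HasDerivAt (fun x ↦ (x / (4 * π)) ^ l * thetaMomentSum j (1 / x))
      ((c / (4 * π)) ^ l *
        (l / c * thetaMomentSum j (1 / c) + π / c ^ 2 * thetaMomentSum (j + 1) (1 / c))) c := by
  have hinv : HasDerivAt (fun x : ℝ ↦ 1 / x) (-(c ^ 2)⁻¹) c := by
    simpa only [one_div] using hasDerivAt_inv hc.ne'
  have hpow : HasDerivAt (fun x ↦ (x / (4 * π)) ^ l)
      (l * (c / (4 * π)) ^ (l - 1) / (4 * π)) c := by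
    simpa [div_eq_mul_inv, mul_assoc] using ((hasDerivAt_id c).div_const (4 * π)).fun_pow l
  refine (hpow.fun_mul ((hasDerivAt_thetaMomentSum j (one_div_pos.2 hc)).comp c hinv)).congr_deriv
    ?_
  rw [natCast_mul_pow_sub_one _ (by positivity), Function.comp_apply]
  field_simp

noncomputable def dualityCoeff (m l : ℕ) : ℝ :=
  if l ≤ m then ((2 * m).factorial : ℝ) / (l.factorial * (2 * m - 2 * l).factorial) else 0

lemma dualityCoeff_zero_right (m : ℕ) : dualityCoeff m 0 = 1 := by
  simp [dualityCoeff, Nat.factorial_ne_zero]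

lemma dualityCoeff_of_lt {m l : ℕ} (h : m < l) : dualityCoeff m l = 0 :=
  if_neg h.not_ge

lemma dualityCoeff_succ_succ (m l : ℕ) :
    dualityCoeff (m + 1) (l + 1) =
      dualityCoeff m (l + 1) + (8 * m + 2 - 4 * l) * dualityCoeff m l := by
  obtain hlm | rfl | hml := lt_trichotomy l m
  · obtain ⟨k, rfl⟩ := Nat.exists_eq_add_of_lt hlm
    simp only [dualityCoeff, if_pos (by omega : l + 1 ≤ l + k + 1 + 1),
      if_pos (by omega : l + 1 ≤ l + k + 1), if_pos (by omega : l ≤ l + k + 1)]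
    rw [show 2 * (l + k + 1 + 1) - 2 * (l + 1) = 2 * k + 1 + 1 by omega,
      show 2 * (l + k + 1) - 2 * (l + 1) = 2 * k by omega,
      show 2 * (l + k + 1) - 2 * l = 2 * k + 1 + 1 by omega,
      show 2 * (l + k + 1 + 1) = 2 * (l + k + 1) + 1 + 1 by omega]
    simp only [Nat.factorial_succ]
    push_cast
    field_simp
    ring
  · simp only [dualityCoeff, le_refl, if_true, if_neg (by omega : ¬ l + 1 ≤ l)]
    rw [show 2 * (l + 1) = 2 * l + 1 + 1 by omega, Nat.sub_self, Nat.sub_self]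
    simp only [Nat.factorial_succ]
    push_cast
    field_simp
    ring
  · rw [dualityCoeff_of_lt (by omega), dualityCoeff_of_lt (by omega), dualityCoeff_of_lt hml]
    ring

lemma sum_dualityCoeff_succ (m : ℕ) (q : ℝ) (h : ℕ → ℝ) :
    ∑ l ∈ range (m + 1 + 1),
        dualityCoeff (m + 1) l * (-1) ^ (m + 1 + l) * (q ^ l * h (m + 1 - l)) =
      ∑ l ∈ range (m + 1), dualityCoeff m l * (-1) ^ (m + l) *
        ((8 * m + 2 - 4 * l) * q ^ (l + 1) * h (m - l) - q ^ l * h (m + 1 - l)) := by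
  set g : ℕ → ℝ := fun l ↦ dualityCoeff m l * (-1) ^ (m + l) * q ^ l * h (m + 1 - l)
  set a : ℕ → ℝ := fun l ↦
    dualityCoeff m l * (-1) ^ (m + l) * (8 * m + 2 - 4 * l) * q ^ (l + 1) * h (m - l)
  have hg : ∑ l ∈ range (m + 1), g (l + 1) + g 0 = ∑ l ∈ range (m + 1), g l := by
    rw [← sum_range_succ', sum_range_succ]
    simp [g, dualityCoeff_of_lt (lt_add_one m)]
  calc _ = ∑ l ∈ range (m + 1), (a l - g (l + 1)) - g 0 := by
        rw [sum_range_succ', sub_eq_add_neg]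
        congr 1
        · refine sum_congr rfl fun l _ ↦ ?_
          simp only [a, g, dualityCoeff_succ_succ, Nat.add_sub_add_right]
          ring
        · simp [g, dualityCoeff_zero_right, pow_succ]
    _ = ∑ l ∈ range (m + 1), (a l - g l) := by
        rw [sum_sub_distrib, sum_sub_distrib, ← hg]
        ring
    _ = _ := sum_congr rfl fun l _ ↦ by ring

-- `(-1) ^ (m + l)` rather than `(-1) ^ (m - l)`: the sign then flips with `l` without any
-- truncated subtraction.
noncomputable def dualSide (m : ℕ) (c : ℝ) : ℝ :=
  ∑ l ∈ range (m + 1),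
    dualityCoeff m l * (-1) ^ (m + l) * ((c / (4 * π)) ^ l * thetaMomentSum (m - l) (1 / c))

lemma hasDerivAt_dualSide (m : ℕ) {c : ℝ} (hc : 0 < c) :
    HasDerivAt (dualSide m)
      ((2 * m + 1 / 2) / c * dualSide m c - π / c ^ 2 * dualSide (m + 1) c) c := by
  have hsucc : dualSide (m + 1) c = ∑ l ∈ range (m + 1), dualityCoeff m l * (-1) ^ (m + l) *
      ((8 * m + 2 - 4 * l) * (c / (4 * π)) ^ (l + 1) * thetaMomentSum (m - l) (1 / c) -
        (c / (4 * π)) ^ l * thetaMomentSum (m + 1 - l) (1 / c)) :=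
    sum_dualityCoeff_succ m _ fun j ↦ thetaMomentSum j (1 / c)
  refine (HasDerivAt.fun_sum fun l _ ↦
    (hasDerivAt_div_pow_mul_thetaMomentSum_one_div l (m - l) hc).const_mul
      (dualityCoeff m l * (-1) ^ (m + l))).congr_deriv ?_
  rw [hsucc, dualSide, mul_sum, mul_sum, ← sum_sub_distrib]
  refine sum_congr rfl fun l hl ↦ ?_
  rw [show m - l + 1 = m + 1 - l by have := mem_range.1 hl; omega, pow_succ (c / (4 * π)) l]
  generalize (c / (4 * π)) ^ l = q
  have := pi_pos
  field_simp
  ring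

lemma sqrt_mul_pow_mul_thetaMomentSum_eq_dualSide (m : ℕ) {c : ℝ} (hc : 0 < c) :
    √c * c ^ (2 * m) * thetaMomentSum m c = dualSide m c := by
  refine eqOn_of_hasDerivAt_recurrence (f := fun m x ↦ √x * x ^ (2 * m) * thetaMomentSum m x)
    (g := dualSide) (a := fun m x ↦ (2 * m + 1 / 2) / x) (b := fun _ x ↦ π / x ^ 2) isOpen_Ioi
    (fun _ x (hx : 0 < x) ↦ by positivity)
    (fun m _ hx ↦ hasDerivAt_sqrt_mul_pow_mul_thetaMomentSum m hx)
    (fun m _ hx ↦ hasDerivAt_dualSide m hx) (fun x hx ↦ ?_) m hc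
  rw [dualSide, sum_range_one, dualityCoeff_zero_right, thetaMomentSum_zero_one_div hx]
  simp

lemma dualSide_eq_add_sum (m : ℕ) (c : ℝ) :
    dualSide m c = (-1) ^ m * thetaMomentSum m (1 / c) +
      ∑ l ∈ Icc 1 m, ((2 * m).factorial : ℝ) / (l.factorial * (2 * m - 2 * l).factorial) *
        (-1) ^ (m - l) * (c / (4 * π)) ^ l * thetaMomentSum (m - l) (1 / c) := by
  rw [dualSide, range_eq_Ico, sum_eq_sum_Ico_succ_bot (Nat.succ_pos m), zero_add,
    Nat.succ_eq_add_one, Finset.Ico_add_one_right_eq_Icc]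
  congr 1
  · simp [dualityCoeff_zero_right]
  · refine sum_congr rfl fun l hl ↦ ?_
    have hlm := (mem_Icc.1 hl).2
    rw [dualityCoeff, if_pos hlm, neg_one_pow_add_eq_neg_one_pow_sub hlm]
    ring

theorem discreteGaussian_moment_duality_general (c : ℝ) (hc : 0 < c) (m : ℕ) :
    c ^ (2 * m) * discreteGaussianMoment c m
        - (-1 : ℝ) ^ m * discreteGaussianMoment (1 / c) m
    = ∑ l ∈ Finset.Icc 1 m,
        ((Nat.factorial (2 * m) : ℝ) /
            ((Nat.factorial l : ℝ) * (Nat.factorial (2 * m - 2 * l) : ℝ))) *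
          (-1 : ℝ) ^ (m - l) * (c / (4 * π)) ^ l *
          discreteGaussianMoment (1 / c) (m - l) := by
  have hsum := eq_sub_of_add_eq' <|
    ((sqrt_mul_pow_mul_thetaMomentSum_eq_dualSide m hc).trans (dualSide_eq_add_sum m c)).symm
  have := thetaMomentSum_zero_pos hc
  have := sqrt_pos.2 hc
  simp only [discreteGaussianMoment_eq_div, ← mul_div_assoc, ← sum_div]
  rw [hsum, thetaMomentSum_zero_one_div hc]
  field_simp

/-- Moment recursion under modular duality for the discrete Gaussian `θ₃`-distribution. -/
theorem discreteGaussian_moment_duality (c : ℝ) (hc : 0 < c) (m : ℕ) (hm : 1 ≤ m) :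
    c ^ (2 * m) * discreteGaussianMoment c m
        - (-1 : ℝ) ^ m * discreteGaussianMoment (1 / c) m
    = ∑ l ∈ Finset.Icc 1 m,
        ((Nat.factorial (2 * m) : ℝ) /
            ((Nat.factorial l : ℝ) * (Nat.factorial (2 * m - 2 * l) : ℝ))) *
          (-1 : ℝ) ^ (m - l) * (c / (4 * π)) ^ l *
          discreteGaussianMoment (1 / c) (m - l) :=
  discreteGaussian_moment_duality_general c hc m
end

section
/- Variance duality for the discrete Gaussian θ₃-distribution: for c > 0 let σ²(c) = ( ∑_{n∈ℤ} n² e^{-cπn²} ) / ( ∑_{n∈ℤ} e^{-cπn²} ) be the variance of the discrete Gaussian θ₃-distribution with parameter c. Then for every c > 0: c · σ²(c) + (1/c) · σ²(1/c) = 1/(2π). -/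
/-!
With `θ(a) = ∑ₙ exp(-π a n²)`, termwise differentiation gives `θ' = -π σ² θ`, and Poisson
summation gives `θ(1/a) = √a θ(a)`. Differentiating the latter at `c` and dividing by
`√c θ(c)` yields `π σ²(1/c) / c² = 1/(2c) - π σ²(c)`, which is the duality after
multiplying by `c / π`.
-/

open Real

/-- The variance of the discrete Gaussian `θ₃`-distribution with parameter `c > 0`. -/
noncomputable def discreteGaussianVariance (c : ℝ) : ℝ :=
  (∑' n : ℤ, (n : ℝ) ^ 2 * Real.exp (-c * π * (n : ℝ) ^ 2)) /
    (∑' n : ℤ, Real.exp (-c * π * (n : ℝ) ^ 2))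

noncomputable def realTheta (a : ℝ) : ℝ := ∑' n : ℤ, exp (-π * a * (n : ℝ) ^ 2)

lemma summable_pow_mul_exp_neg_pi_mul_sq (k : ℕ) {a : ℝ} (ha : 0 < a) :
    Summable fun n : ℤ => (n : ℝ) ^ k * exp (-π * a * (n : ℝ) ^ 2) := by
  refine (summable_pow_mul_jacobiTheta₂_term_bound 0 ha k).of_norm_bounded fun n => ?_
  simp [mul_assoc]

lemma summable_exp_neg_pi_mul_sq {a : ℝ} (ha : 0 < a) :
    Summable fun n : ℤ => exp (-π * a * (n : ℝ) ^ 2) := by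
  simpa using summable_pow_mul_exp_neg_pi_mul_sq 0 ha

lemma realTheta_pos {a : ℝ} (ha : 0 < a) : 0 < realTheta a :=
  (summable_exp_neg_pi_mul_sq ha).tsum_pos (fun _ => (exp_pos _).le) 0 (exp_pos _)

lemma realTheta_inv {a : ℝ} (ha : 0 < a) : realTheta a⁻¹ = √a * realTheta a := by
  rw [realTheta, realTheta, tsum_exp_neg_mul_int_sq ha, ← sqrt_eq_rpow, ← mul_assoc,
    mul_one_div_cancel (sqrt_pos.2 ha).ne', one_mul]
  simp only [div_eq_mul_inv]

lemma hasDerivAt_realTheta {a : ℝ} (ha : 0 < a) :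
    HasDerivAt realTheta (-π * ∑' n : ℤ, (n : ℝ) ^ 2 * exp (-π * a * (n : ℝ) ^ 2)) a := by
  have hmem : a ∈ Set.Ioi (a / 2) := half_lt_self ha
  rw [← tsum_mul_left]
  refine hasDerivAt_tsum_of_isPreconnected (g := fun (n : ℤ) y => exp (-π * y * (n : ℝ) ^ 2))
    (g' := fun (n : ℤ) y => -π * ((n : ℝ) ^ 2 * exp (-π * y * (n : ℝ) ^ 2)))
    (u := fun n : ℤ => π * ((n : ℝ) ^ 2 * exp (-π * (a / 2) * (n : ℝ) ^ 2)))
    ((summable_pow_mul_exp_neg_pi_mul_sq 2 (half_pos ha)).mul_left π) isOpen_Ioi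
    isPreconnected_Ioi (fun n y _ => ?_) (fun n y hy => ?_) hmem
    (summable_exp_neg_pi_mul_sq ha) hmem
  · exact (((hasDerivAt_id y).const_mul (-π)).mul_const ((n : ℝ) ^ 2)).exp.congr_deriv
      (by simp only [id, mul_one]; ring)
  · rw [norm_mul, norm_neg, norm_mul, norm_of_nonneg pi_pos.le, norm_of_nonneg (sq_nonneg _),
      norm_of_nonneg (exp_pos _).le]
    gcongr ?_ * (_ * exp ?_)
    nlinarith [pi_pos, mul_le_mul_of_nonneg_right (le_of_lt hy) (sq_nonneg (n : ℝ))]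

lemma discreteGaussianVariance_mul_realTheta {a : ℝ} (ha : 0 < a) :
    discreteGaussianVariance a * realTheta a =
      ∑' n : ℤ, (n : ℝ) ^ 2 * exp (-π * a * (n : ℝ) ^ 2) := by
  simp only [discreteGaussianVariance, realTheta, neg_mul, mul_comm a π]
  exact div_mul_cancel₀ _ (by simpa [realTheta] using (realTheta_pos ha).ne')

lemma hasDerivAt_realTheta_eq_variance {a : ℝ} (ha : 0 < a) :
    HasDerivAt realTheta (-π * discreteGaussianVariance a * realTheta a) a := by
  rw [mul_assoc, discreteGaussianVariance_mul_realTheta ha]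
  exact hasDerivAt_realTheta ha

/-- Variance duality for the discrete Gaussian `θ₃`-distribution. -/
theorem discreteGaussian_variance_duality (c : ℝ) (hc : 0 < c) :
    c * discreteGaussianVariance c + (1 / c) * discreteGaussianVariance (1 / c)
      = 1 / (2 * π) := by
  have hθ := realTheta_pos hc
  have hsqrt := sqrt_pos.2 hc
  have hcomp : HasDerivAt (fun a => realTheta a⁻¹)
      (-π * discreteGaussianVariance c⁻¹ * realTheta c⁻¹ * -(c ^ 2)⁻¹) c :=
    (hasDerivAt_realTheta_eq_variance (inv_pos.2 hc)).comp c (hasDerivAt_inv hc.ne')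
  have hprod : HasDerivAt (fun a => realTheta a⁻¹)
      (1 / (2 * √c) * realTheta c + √c * (-π * discreteGaussianVariance c * realTheta c)) c :=
    ((hasDerivAt_sqrt hc.ne').mul (hasDerivAt_realTheta_eq_variance hc)).congr_of_eventuallyEq
      ((eventually_gt_nhds hc).mono fun a ha => realTheta_inv ha)
  have key := hcomp.unique hprod
  rw [realTheta_inv hc] at key
  field_simp at key ⊢
  rw [sq_sqrt hc.le] at key
  apply mul_left_cancel₀ hc.ne'
  linear_combination key
end

section
/- Self-dual variance of the discrete Gaussian θ₃-distribution: ( ∑_{n∈ℤ} n² e^{-πn²} ) / ( ∑_{n∈ℤ} e^{-πn²} ) = 1/(4π). That is, the variance of the discrete Gaussian θ₃-distribution with parameter c = 1 (equivalently, with lemniscatic elliptic modulus k = 1/√2) equals 1/(4π). -/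
open Real Set

/-! Write `Θ t = ∑ₙ exp (-π t n²)`. Poisson summation gives `Θ (1/t) = √t · Θ t`. Differentiating
at the fixed point `t = 1` of `t ↦ 1/t` yields `-Θ' 1 = Θ 1 / 2 + Θ' 1`, so `Θ' 1 = -Θ 1 / 4`,
while termwise differentiation gives `Θ' 1 = -π ∑ₙ n² exp (-π n²)`. -/

noncomputable def gaussianTheta (t : ℝ) : ℝ := ∑' n : ℤ, exp (-π * t * n ^ 2)

lemma summable_pow_abs_mul_exp_neg_mul_sq {a : ℝ} (ha : 0 < a) (k : ℕ) :
    Summable fun n : ℤ ↦ |(n : ℝ)| ^ k * exp (-π * a * n ^ 2) := by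
  simpa [mul_assoc] using summable_pow_mul_jacobiTheta₂_term_bound 0 ha k

lemma summable_exp_neg_mul_sq {a : ℝ} (ha : 0 < a) :
    Summable fun n : ℤ ↦ exp (-π * a * n ^ 2) := by
  simpa using summable_pow_abs_mul_exp_neg_mul_sq ha 0

lemma gaussianTheta_pos {t : ℝ} (ht : 0 < t) : 0 < gaussianTheta t :=
  (summable_exp_neg_mul_sq ht).tsum_pos (fun _ ↦ (exp_pos _).le) 0 (exp_pos _)

lemma hasDerivAt_gaussianTheta {t : ℝ} (ht : 0 < t) :
    HasDerivAt gaussianTheta (-π * ∑' n : ℤ, (n : ℝ) ^ 2 * exp (-π * t * n ^ 2)) t := by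
  have hterm (n : ℤ) (s : ℝ) : HasDerivAt (fun s ↦ exp (-π * s * n ^ 2))
      (-π * ((n : ℝ) ^ 2 * exp (-π * s * n ^ 2))) s := by
    have h : HasDerivAt (fun s ↦ -π * s * (n : ℝ) ^ 2) (-π * n ^ 2) s := by
      simpa using ((hasDerivAt_id s).const_mul (-π)).mul_const ((n : ℝ) ^ 2)
    convert h.exp using 1
    ring
  have hbound (n : ℤ) (s : ℝ) (hs : s ∈ Ioi (t / 2)) :
      ‖-π * ((n : ℝ) ^ 2 * exp (-π * s * n ^ 2))‖ ≤
        π * (|(n : ℝ)| ^ 2 * exp (-π * (t / 2) * n ^ 2)) := by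
    have hexp : -π * s * n ^ 2 ≤ -π * (t / 2) * n ^ 2 :=
      mul_le_mul_of_nonneg_right (mul_le_mul_of_nonpos_left hs.le (by linarith [pi_pos]))
        (sq_nonneg _)
    rw [norm_mul, norm_neg, norm_mul, Real.norm_of_nonneg pi_pos.le, Real.norm_eq_abs,
      Real.norm_of_nonneg (exp_pos _).le, abs_pow]
    gcongr
  rw [← tsum_mul_left]
  exact hasDerivAt_tsum_of_isPreconnected
    ((summable_pow_abs_mul_exp_neg_mul_sq (half_pos ht) 2).mul_left π) isOpen_Ioi
    isPreconnected_Ioi (fun n s _ ↦ hterm n s) hbound (half_lt_self ht)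
    (summable_exp_neg_mul_sq ht) (half_lt_self ht)

lemma gaussianTheta_inv {t : ℝ} (ht : 0 < t) : gaussianTheta t⁻¹ = √t * gaussianTheta t := by
  have h := Real.tsum_exp_neg_mul_int_sq ht
  rw [← Real.sqrt_eq_rpow] at h
  simp only [gaussianTheta]
  rw [h]
  field_simp

lemma hasDerivAt_gaussianTheta_one : HasDerivAt gaussianTheta (-gaussianTheta 1 / 4) 1 := by
  obtain ⟨θ', hθ'⟩ : ∃ θ', HasDerivAt gaussianTheta θ' 1 :=
    ⟨_, hasDerivAt_gaussianTheta one_pos⟩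
  have hlhs : HasDerivAt (fun t ↦ gaussianTheta t⁻¹) (-θ') 1 := by
    have hθ'_inv : HasDerivAt gaussianTheta θ' (1 : ℝ)⁻¹ := by rwa [inv_one]
    exact (hθ'_inv.comp 1 (hasDerivAt_inv one_ne_zero)).congr_deriv (by norm_num)
  have hrhs : HasDerivAt (fun t ↦ √t * gaussianTheta t) (gaussianTheta 1 / 2 + θ') 1 :=
    ((Real.hasDerivAt_sqrt one_ne_zero).mul hθ').congr_deriv (by norm_num; ring)
  have heq : (fun t ↦ gaussianTheta t⁻¹) =ᶠ[nhds 1] fun t ↦ √t * gaussianTheta t :=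
    Filter.eventually_of_mem (Ioi_mem_nhds one_pos) fun _ ↦ gaussianTheta_inv
  have hderiv_eq := hlhs.unique (hrhs.congr_of_eventuallyEq heq)
  convert hθ' using 1
  linarith

/-- Self-dual variance of the discrete Gaussian `θ₃`-distribution at `c = 1`. -/
theorem discreteGaussian_variance_self_dual :
    (∑' n : ℤ, (n : ℝ) ^ 2 * Real.exp (-π * (n : ℝ) ^ 2)) /
        (∑' n : ℤ, Real.exp (-π * (n : ℝ) ^ 2))
      = 1 / (4 * π) := by
  have hderiv := (hasDerivAt_gaussianTheta one_pos).unique hasDerivAt_gaussianTheta_one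
  have hpos := gaussianTheta_pos one_pos
  simp only [gaussianTheta, mul_one] at hderiv hpos
  rw [div_eq_div_iff hpos.ne' (by positivity)]
  linarith
end

section
/- Addition (convolution) rule for discrete Gaussian variables: if X is a discrete Gaussian θ₂-distributed random variable with parameter c > 0 and Y is an independent discrete Gaussian θ₃-distributed random variable with the same parameter c, then X + Y is discrete Gaussian θ₂-distributed with parameter c/2. Explicitly, for every c > 0 and every m ∈ ℤ: ∑_{n∈ℤ} ( e^{-cπ(m-n+1/2)²} / ∑_{j∈ℤ} e^{-cπ(j+1/2)²} ) · ( e^{-cπn²} / ∑_{j∈ℤ} e^{-cπj²} ) = e^{-(c/2)π(m+1/2)²} / ∑_{j∈ℤ} e^{-(c/2)π(j+1/2)²}. -/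
open Real

private lemma gauss_summable {b : ℝ} (hb : 0 < b) (d : ℝ) :
    Summable fun n : ℤ => Real.exp (-b * ((n : ℝ) + d) ^ 2) := by
  have h : 0 < b / π := div_pos hb pi_pos
  refine (HurwitzZeta.hasSum_int_evenKernel d h).summable.congr fun n => ?_
  congr 1
  field_simp
  try ring

private lemma gauss_summable' {b : ℝ} (hb : 0 < b) (d : ℝ) :
    Summable fun n : ℤ => Real.exp (-b * ((n : ℝ) - d) ^ 2) :=
  (gauss_summable hb (-d)).congr fun n => by rw [← sub_eq_add_neg]

/-- Addition (convolution) rule: the sum of independent discrete Gaussian `θ₂(c)`- and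
`θ₃(c)`-distributed random variables is discrete Gaussian `θ₂(c/2)`-distributed, expressed
via the probability mass functions. -/
theorem discreteGaussian_theta2_theta3_convolution (c : ℝ) (hc : 0 < c) (m : ℤ) :
    ∑' n : ℤ,
        (Real.exp (-c * π * ((m : ℝ) - (n : ℝ) + 1 / 2) ^ 2) /
            ∑' j : ℤ, Real.exp (-c * π * ((j : ℝ) + 1 / 2) ^ 2)) *
        (Real.exp (-c * π * (n : ℝ) ^ 2) /
            ∑' j : ℤ, Real.exp (-c * π * (j : ℝ) ^ 2))
    = Real.exp (-(c / 2) * π * ((m : ℝ) + 1 / 2) ^ 2) /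
        ∑' j : ℤ, Real.exp (-(c / 2) * π * ((j : ℝ) + 1 / 2) ^ 2) := by
  have hcπ : 0 < c * π := mul_pos hc pi_pos
  have h2cπ : 0 < 2 * c * π := by positivity
  have hc2π : 0 < c / 2 * π := by positivity
  -- the three theta constants
  set A := ∑' j : ℤ, Real.exp (-c * π * ((j : ℝ) + 1 / 2) ^ 2) with hA_def
  set B := ∑' j : ℤ, Real.exp (-c * π * (j : ℝ) ^ 2) with hB_def
  set D := ∑' j : ℤ, Real.exp (-(c / 2) * π * ((j : ℝ) + 1 / 2) ^ 2) with hD_def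
  set T := ∑' n : ℤ, Real.exp (-(2 * c * π) * ((n : ℝ) - 1 / 4) ^ 2) with hT_def
  have hA : Summable fun j : ℤ => Real.exp (-c * π * ((j : ℝ) + 1 / 2) ^ 2) :=
    (gauss_summable hcπ (1 / 2)).congr fun n => by congr 1; ring
  have hB : Summable fun j : ℤ => Real.exp (-c * π * (j : ℝ) ^ 2) :=
    (gauss_summable hcπ 0).congr fun n => by congr 1; ring
  have hD : Summable fun j : ℤ => Real.exp (-(c / 2) * π * ((j : ℝ) + 1 / 2) ^ 2) :=
    (gauss_summable hc2π (1 / 2)).congr fun n => by congr 1; ring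
  have hT : ∀ d : ℝ, Summable fun n : ℤ => Real.exp (-(2 * c * π) * ((n : ℝ) - d) ^ 2) :=
    fun d => gauss_summable' h2cπ d
  have hA0 : 0 < A := Summable.tsum_pos hA (fun n => (exp_pos _).le) 0 (exp_pos _)
  have hB0 : 0 < B := Summable.tsum_pos hB (fun n => (exp_pos _).le) 0 (exp_pos _)
  have hD0 : 0 < D := Summable.tsum_pos hD (fun n => (exp_pos _).le) 0 (exp_pos _)
  -- pointwise factorization
  have hfac : ∀ p n : ℤ,
      Real.exp (-c * π * ((p : ℝ) - (n : ℝ) + 1 / 2) ^ 2) * Real.exp (-c * π * (n : ℝ) ^ 2)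
        = Real.exp (-(c / 2) * π * ((p : ℝ) + 1 / 2) ^ 2) *
            Real.exp (-(2 * c * π) * ((n : ℝ) - ((p : ℝ) + 1 / 2) / 2) ^ 2) := by
    intro p n
    rw [← Real.exp_add, ← Real.exp_add]
    congr 1
    ring
  -- shifted Gaussian sum is independent of the shift's integer part
  have hSm : ∀ p : ℤ,
      (∑' n : ℤ, Real.exp (-(2 * c * π) * ((n : ℝ) - ((p : ℝ) + 1 / 2) / 2) ^ 2)) = T := by
    intro p
    rw [hT_def]
    set f : ℤ → ℝ := fun n => Real.exp (-(2 * c * π) * ((n : ℝ) - 1 / 4) ^ 2) with hf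
    rcases Int.even_or_odd p with ⟨k, hk⟩ | ⟨k, hk⟩
    · rw [← (Equiv.subRight k).tsum_eq f]
      refine tsum_congr fun n => ?_
      simp only [f, Equiv.subRight_apply]
      congr 1
      push_cast [hk]
      ring
    · rw [← (Equiv.subLeft (k + 1)).tsum_eq f]
      refine tsum_congr fun n => ?_
      simp only [f, Equiv.subLeft_apply]
      congr 1
      push_cast [hk]
      ring
  -- row sums
  have hrow : ∀ p : ℤ,
      (∑' n : ℤ, Real.exp (-c * π * ((p : ℝ) - (n : ℝ) + 1 / 2) ^ 2) *
          Real.exp (-c * π * (n : ℝ) ^ 2))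
        = Real.exp (-(c / 2) * π * ((p : ℝ) + 1 / 2) ^ 2) * T := by
    intro p
    rw [tsum_congr (hfac p), tsum_mul_left, hSm p]
  -- key theta identity  T * D = A * B  by Fubini
  have hkey : T * D = A * B := by
    have hrowS : ∀ p : ℤ, Summable fun n : ℤ =>
        Real.exp (-c * π * ((p : ℝ) - (n : ℝ) + 1 / 2) ^ 2) *
          Real.exp (-c * π * (n : ℝ) ^ 2) := by
      intro p
      exact (((hT (((p : ℝ) + 1 / 2) / 2)).mul_left
        (Real.exp (-(c / 2) * π * ((p : ℝ) + 1 / 2) ^ 2))).congr fun n => (hfac p n).symm)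
    have hF : Summable (Function.uncurry fun p n : ℤ =>
        Real.exp (-c * π * ((p : ℝ) - (n : ℝ) + 1 / 2) ^ 2) *
          Real.exp (-c * π * (n : ℝ) ^ 2)) := by
      rw [summable_prod_of_nonneg (fun x => by simp only [Function.uncurry]; positivity)]
      refine ⟨hrowS, ?_⟩
      exact (hD.mul_right T).congr fun p => (hrow p).symm
    have hcolS : ∀ n : ℤ, Summable fun p : ℤ =>
        Real.exp (-c * π * ((p : ℝ) - (n : ℝ) + 1 / 2) ^ 2) *
          Real.exp (-c * π * (n : ℝ) ^ 2) := by
      intro n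
      refine Summable.mul_right _ ?_
      exact (gauss_summable' hcπ ((n : ℝ) - 1 / 2)).congr fun p => by congr 1; ring
    have hswap := Summable.tsum_comm' hF hrowS hcolS
    -- ∑' n p = ∑' p n
    have hleft : (∑' (n : ℤ) (p : ℤ),
        Real.exp (-c * π * ((p : ℝ) - (n : ℝ) + 1 / 2) ^ 2) *
          Real.exp (-c * π * (n : ℝ) ^ 2)) = A * B := by
      have hcol : ∀ n : ℤ,
          (∑' p : ℤ, Real.exp (-c * π * ((p : ℝ) - (n : ℝ) + 1 / 2) ^ 2) *
            Real.exp (-c * π * (n : ℝ) ^ 2)) = A * Real.exp (-c * π * (n : ℝ) ^ 2) := by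
        intro n
        rw [tsum_mul_right]
        congr 1
        rw [hA_def, ← (Equiv.subRight n).tsum_eq
          (fun j : ℤ => Real.exp (-c * π * ((j : ℝ) + 1 / 2) ^ 2))]
        refine tsum_congr fun p => ?_
        simp only [Equiv.subRight_apply]
        congr 1
        push_cast
        ring
      rw [tsum_congr hcol, tsum_mul_left, hB_def]
    have hright : (∑' (p : ℤ) (n : ℤ),
        Real.exp (-c * π * ((p : ℝ) - (n : ℝ) + 1 / 2) ^ 2) *
          Real.exp (-c * π * (n : ℝ) ^ 2)) = D * T := by
      rw [tsum_congr hrow, tsum_mul_right, hD_def]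
    rw [hleft, hright] at hswap
    linarith [hswap]
  -- main computation
  have hstep : ∑' n : ℤ,
      (Real.exp (-c * π * ((m : ℝ) - (n : ℝ) + 1 / 2) ^ 2) / A) *
        (Real.exp (-c * π * (n : ℝ) ^ 2) / B)
      = (Real.exp (-(c / 2) * π * ((m : ℝ) + 1 / 2) ^ 2) * T) * (A * B)⁻¹ := by
    have : ∀ n : ℤ,
        (Real.exp (-c * π * ((m : ℝ) - (n : ℝ) + 1 / 2) ^ 2) / A) *
          (Real.exp (-c * π * (n : ℝ) ^ 2) / B)
        = (Real.exp (-c * π * ((m : ℝ) - (n : ℝ) + 1 / 2) ^ 2) *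
            Real.exp (-c * π * (n : ℝ) ^ 2)) * (A * B)⁻¹ := by
      intro n
      rw [div_mul_div_comm, div_eq_mul_inv]
    rw [tsum_congr this, tsum_mul_right, hrow m]
  rw [hstep]
  rw [div_eq_mul_inv]
  rw [mul_assoc]
  congr 1
  field_simp
  linarith [hkey]
end
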